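/- arXiv:1205.2681 — 10 statements merged into one kernel-verified Lean document; each statement's English description precedes it below -/
import Mathlib

section
/- Let A be a |U|×|X| matrix with entries in [0,1] such that every column sums to 1 (i.e., A is column-stochastic as a map from rows indexed by U), every entry is nonnegative, and no row of A is all zero. Define A_min = min_i Σ_j A_{i,j} and a_min = A_min / (|U|(|X| + A_min)). If υ is a 1×|U| vector in the left null space of A (υA = 0) with L1-norm equal to 1, then υ contains at least one positive and at least one negative element; moreover max_{i: υ_i>0} υ_i ≥ a_min and min_{i: υ_i<0} υ_i ≤ -a_min. -/
open Finset

/-- Minimum row sum of the matrix `A`. -/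
noncomputable def Amin {U X : ℕ} [NeZero U] (A : Matrix (Fin U) (Fin X) ℝ) : ℝ :=
  Finset.univ.inf' Finset.univ_nonempty (fun i => ∑ j, A i j)

/-- The constant `a_min = A_min / (|U|(|X| + A_min))`. -/
noncomputable def amin {U X : ℕ} [NeZero U] (A : Matrix (Fin U) (Fin X) ℝ) : ℝ :=
  Amin A / (U * (X + Amin A))

lemma key_aux {U X : ℕ} [NeZero U] [NeZero X]
    (A : Matrix (Fin U) (Fin X) ℝ)
    (hA0 : ∀ i j, 0 ≤ A i j) (hA1 : ∀ i j, A i j ≤ 1)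
    (hrow : ∀ i, ∃ j, A i j ≠ 0)
    (υ : Fin U → ℝ)
    (hnull : ∀ j, ∑ i, υ i * A i j = 0)
    (hnorm : ∑ i, |υ i| = 1) :
    ∃ i, 0 < υ i ∧ amin A ≤ υ i := by
  set r : Fin U → ℝ := fun i => ∑ j, A i j with hr
  have hrpos : ∀ i, 0 < r i := by
    intro i
    obtain ⟨j, hj⟩ := hrow i
    exact Finset.sum_pos' (fun j _ => hA0 i j)
      ⟨j, mem_univ j, lt_of_le_of_ne (hA0 i j) (Ne.symm hj)⟩
  have hAminpos : 0 < Amin A := by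
    rw [Amin]
    exact (Finset.lt_inf'_iff _).2 fun i _ => hrpos i
  have hrX : ∀ i, r i ≤ X := by
    intro i
    calc r i ≤ ∑ _j : Fin X, (1:ℝ) := Finset.sum_le_sum fun j _ => hA1 i j
    _ = X := by simp
  set p : Fin U → ℝ := fun i => max (υ i) 0 with hp
  set n : Fin U → ℝ := fun i => max (-υ i) 0 with hn
  have hpnn : ∀ i, 0 ≤ p i := fun i => le_max_right _ _
  have hnnn : ∀ i, 0 ≤ n i := fun i => le_max_right _ _
  have hdiff : ∀ i, υ i = p i - n i := by
    intro i
    rcases le_or_gt 0 (υ i) with h | h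
    · simp [hp, hn, max_eq_left h, max_eq_right (neg_nonpos_of_nonneg h)]
    · simp [hp, hn, max_eq_right h.le, max_eq_left (neg_nonneg.2 h.le)]
  have habs : ∀ i, |υ i| = p i + n i := by
    intro i
    rcases le_or_gt 0 (υ i) with h | h
    · simp [hp, hn, abs_of_nonneg h, max_eq_left h, max_eq_right (neg_nonpos_of_nonneg h)]
    · simp [hp, hn, abs_of_neg h, max_eq_right h.le, max_eq_left (neg_nonneg.2 h.le)]
  set SP : ℝ := ∑ i, p i with hSP
  set SN : ℝ := ∑ i, n i with hSN
  have hS1 : SP + SN = 1 := by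
    rw [hSP, hSN, ← Finset.sum_add_distrib, ← hnorm]
    exact Finset.sum_congr rfl fun i _ => (habs i).symm
  have hsum0 : ∑ i, υ i * r i = 0 := by
    calc ∑ i, υ i * r i = ∑ i, ∑ j, υ i * A i j := by
          simp [hr, Finset.mul_sum]
      _ = ∑ j, ∑ i, υ i * A i j := Finset.sum_comm
      _ = 0 := by simp [hnull]
  have hkey : ∑ i, p i * r i = ∑ i, n i * r i := by
    have h : ∑ i, (p i - n i) * r i = 0 := by
      rw [← hsum0]; exact Finset.sum_congr rfl fun i _ => by rw [← hdiff]
    have h2 : ∑ i, (p i * r i - n i * r i) = 0 := by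
      rw [← h]; exact Finset.sum_congr rfl fun i _ => by ring
    rw [Finset.sum_sub_distrib] at h2
    linarith
  have h1 : Amin A * SN ≤ ∑ i, n i * r i := by
    rw [hSN, Finset.mul_sum]
    refine Finset.sum_le_sum fun i _ => ?_
    rw [mul_comm]
    exact mul_le_mul_of_nonneg_left (Finset.inf'_le _ (mem_univ i)) (hnnn i)
  have h2 : ∑ i, p i * r i ≤ X * SP := by
    rw [hSP, Finset.mul_sum]
    refine Finset.sum_le_sum fun i _ => ?_
    rw [mul_comm (X:ℝ)]
    exact mul_le_mul_of_nonneg_left (hrX i) (hpnn i)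
  have hSPnn : 0 ≤ SP := Finset.sum_nonneg fun i _ => hpnn i
  have hSPbound : Amin A ≤ ((X:ℝ) + Amin A) * SP := by nlinarith
  set M : ℝ := Finset.univ.sup' Finset.univ_nonempty p with hM
  have hSPM : SP ≤ U * M := by
    calc SP ≤ ∑ _i : Fin U, M :=
          Finset.sum_le_sum fun i _ => Finset.le_sup' _ (mem_univ i)
      _ = U * M := by simp [mul_comm]
  have hUpos : (0:ℝ) < U := by
    exact_mod_cast Nat.pos_of_ne_zero (NeZero.ne U)
  have hXAmin : (0:ℝ) < (X:ℝ) + Amin A := by positivity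
  have haminM : amin A ≤ M := by
    rw [amin, div_le_iff₀ (by positivity)]
    nlinarith
  obtain ⟨i, _, hi⟩ := Finset.exists_mem_eq_sup' Finset.univ_nonempty p
  have haminpos : 0 < amin A := by
    rw [amin]; positivity
  have hpi : amin A ≤ p i := by rw [← hi]; exact haminM
  have hpipos : 0 < p i := lt_of_lt_of_le haminpos hpi
  have hυi : υ i = p i := by
    by_contra h
    have : p i = 0 := by
      rcases max_cases (υ i) 0 with ⟨h1, _⟩ | ⟨h1, _⟩
      · exact absurd h1.symm h
      · exact h1
    linarith
  exact ⟨i, by rw [hυi]; exact hpipos, by rw [hυi]; exact hpi⟩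

theorem stmt_0 {U X : ℕ} [NeZero U] [NeZero X]
    (A : Matrix (Fin U) (Fin X) ℝ)
    (hA0 : ∀ i j, 0 ≤ A i j) (hA1 : ∀ i j, A i j ≤ 1)
    (hcol : ∀ j, ∑ i, A i j = 1)
    (hrow : ∀ i, ∃ j, A i j ≠ 0)
    (υ : Fin U → ℝ)
    (hnull : ∀ j, ∑ i, υ i * A i j = 0)
    (hnorm : ∑ i, |υ i| = 1) :
    (∃ i, 0 < υ i) ∧ (∃ i, υ i < 0) ∧
      (∃ i, 0 < υ i ∧ amin A ≤ υ i) ∧ (∃ i, υ i < 0 ∧ υ i ≤ -(amin A)) := by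
  obtain ⟨i, hip, hia⟩ := key_aux A hA0 hA1 hrow υ hnull hnorm
  have hnull' : ∀ j, ∑ k, (-υ) k * A k j = 0 := by
    intro j
    have := hnull j
    simp only [Pi.neg_apply, neg_mul]
    rw [Finset.sum_neg_distrib]
    linarith
  have hnorm' : ∑ k, |(-υ) k| = 1 := by
    simpa using hnorm
  obtain ⟨k, hkp, hka⟩ := key_aux A hA0 hA1 hrow (-υ) hnull' hnorm'
  simp only [Pi.neg_apply] at hkp hka
  exact ⟨⟨i, hip⟩, ⟨k, by linarith⟩, ⟨i, hip, hia⟩, ⟨k, by linarith, by linarith⟩⟩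
end

section
/- Let B be a |Y|×|U| column-stochastic matrix (nonnegative entries, each column sums to 1). Then every vector ω^T in the right null space of B (Bω^T = 0) is balanced, i.e., Σ_j ω_j = 0. Moreover, if ω^T is a nonzero vector in the right null space of B with L1-norm 1, and b_min := 1/(|U|(|Y|+1)), then max_{j: ω_j>0} ω_j ≥ b_min and min_{j: ω_j<0} ω_j ≤ -b_min. -/
open Finset

theorem stmt_2 {Y U : ℕ} [NeZero U] [NeZero Y]
    (B : Matrix (Fin Y) (Fin U) ℝ)
    (hB0 : ∀ i j, 0 ≤ B i j)
    (hcol : ∀ j, ∑ i, B i j = 1)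
    (ω : Fin U → ℝ)
    (hnull : ∀ i, ∑ j, B i j * ω j = 0) :
    (∑ j, ω j = 0) ∧
    (ω ≠ 0 → (∑ j, |ω j| = 1) →
      (∃ j, 0 < ω j ∧ (1 : ℝ) / (U * (Y + 1)) ≤ ω j) ∧
      (∃ j, ω j < 0 ∧ ω j ≤ -((1 : ℝ) / (U * (Y + 1))))) := by
  have hU : (0:ℝ) < U := by exact_mod_cast Nat.pos_of_ne_zero (NeZero.ne U)
  have hY : (1:ℝ) ≤ Y := by exact_mod_cast Nat.one_le_iff_ne_zero.mpr (NeZero.ne Y)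
  have hsum : ∑ j, ω j = 0 := by
    have h : ∑ i, ∑ j, B i j * ω j = 0 := by simp [hnull]
    rw [Finset.sum_comm] at h
    have h2 : ∀ j : Fin U, ∑ i, B i j * ω j = ω j := by
      intro j
      rw [← Finset.sum_mul, hcol, one_mul]
    rwa [Finset.sum_congr rfl (fun j _ => h2 j)] at h
  refine ⟨hsum, fun _ hL1 => ?_⟩
  have hbound : (1:ℝ) / (U * (Y + 1)) ≤ 1 / (2 * U) := by
    apply div_le_div_of_nonneg_left (by norm_num) (by positivity)
    nlinarith
  have key : ∀ v : Fin U → ℝ, (∑ j, v j = 0) → (∑ j, |v j| = 1) →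
      ∃ j, 0 < v j ∧ (1:ℝ) / (U * (Y + 1)) ≤ v j := by
    intro v hs hl
    have hpos : ∑ j, max (v j) 0 = 1 / 2 := by
      have : ∀ x : ℝ, max x 0 = (|x| + x) / 2 := by
        intro x; rcases le_or_gt 0 x with h | h
        · rw [max_eq_left h, abs_of_nonneg h]; ring
        · rw [max_eq_right h.le, abs_of_neg h]; ring
      simp only [this]
      rw [← Finset.sum_div, Finset.sum_add_distrib, hl, hs]
      norm_num
    have hcs : ∑ _j : Fin U, (1:ℝ) / (2 * U) = 1 / 2 := by
      rw [Finset.sum_const, Finset.card_univ, Fintype.card_fin, nsmul_eq_mul]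
      field_simp
    have hle : ∑ _j : Fin U, (1:ℝ) / (2 * U) ≤ ∑ j, max (v j) 0 := by
      rw [hcs, hpos]
    obtain ⟨j, _, hj⟩ := Finset.exists_le_of_sum_le
      (Finset.univ_nonempty (α := Fin U)) hle
    have hjpos : 0 < max (v j) 0 := lt_of_lt_of_le (by positivity) hj
    have hvj : 0 < v j := by
      by_contra h
      push_neg at h
      rw [max_eq_right h] at hjpos
      exact lt_irrefl 0 hjpos
    refine ⟨j, hvj, ?_⟩
    rw [max_eq_left hvj.le] at hj
    exact hbound.trans hj
  refine ⟨key ω hsum hL1, ?_⟩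
  obtain ⟨j, hj1, hj2⟩ := key (fun j => -ω j) (by simpa using hsum) (by simpa using hL1)
  exact ⟨j, by linarith, by linarith⟩
end

section
/- Let A be a |U|×|X| matrix with nonnegative entries, columns summing to 1, and no zero rows; let a_min be as in the context. Let a_min ≤ a ≤ 1, 2 ≤ n ≤ |U|, 0 ≤ ε_s < a_min, and let ε, ε_{n-1} > 0. Define ε'_n = (ε+ε_s)/(a_min-ε_s) + (n-1)(ε+ε_{n-1}+ε_s+ε_s·ε_{n-1})/(a(a_min-ε_s)), and suppose ε'_n < a_min. Suppose the left null space of A contains: (i) an (n-1)×|U| matrix Υ whose rows are L1-normalized, with Υ_{i,i} ≥ a for each i and Υ_{i,j} = 0 for j ≠ i, j ≤ n-1 and Υ_{i,j} ≤ ε_{n-1} for j > n-1 (i.e., Υ is (a, ε_{n-1})-diagonal polarized); and (ii) an L1-normalized vector υ with υ_n ≥ a and υ_j ≤ ε for j ≠ n, which is ε_s-dependent on the rows of Υ (i.e., there exist coefficients c_i with ||υ - Σ_i c_i Υ_i||_1 ≤ ε_s). Then for every ε' with ε'_n ≤ ε' < a_min, the left null space of A contains an L1-normalized vector that is (a_min,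 ε')-double polarized at (m, n) for some m < n, meaning its m-th entry is ≥ a_min, its n-th entry is ≤ -a_min, and all other entries have absolute value ≤ ε'. -/
open Finset

lemma Amin_pos {U X : ℕ} [NeZero U] (A : Matrix (Fin U) (Fin X) ℝ)
    (hA0 : ∀ i j, 0 ≤ A i j) (hrow : ∀ i, ∃ j, A i j ≠ 0) : 0 < Amin A := by
  rw [Amin, Finset.lt_inf'_iff]
  intro i _
  obtain ⟨j, hj⟩ := hrow i
  have hjpos : 0 < A i j := lt_of_le_of_ne (hA0 i j) (Ne.symm hj)
  have h := Finset.single_le_sum (f := fun j => A i j) (fun j _ => hA0 i j) (Finset.mem_univ j)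
  linarith

lemma Ucast_pos {U : ℕ} [NeZero U] : (0:ℝ) < U := by
  exact_mod_cast Nat.pos_of_ne_zero (NeZero.ne U)

lemma amin_pos {U X : ℕ} [NeZero U] (A : Matrix (Fin U) (Fin X) ℝ)
    (hA0 : ∀ i j, 0 ≤ A i j) (hrow : ∀ i, ∃ j, A i j ≠ 0) : 0 < amin A := by
  have h1 := Amin_pos A hA0 hrow
  have h2 : (0:ℝ) < U := Ucast_pos
  have h3 : (0:ℝ) ≤ X := Nat.cast_nonneg X
  rw [amin]
  apply div_pos h1
  exact mul_pos h2 (by linarith)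

lemma amin_lt_one {U X : ℕ} [NeZero U] [NeZero X] (A : Matrix (Fin U) (Fin X) ℝ)
    (hA0 : ∀ i j, 0 ≤ A i j) (hrow : ∀ i, ∃ j, A i j ≠ 0) : amin A < 1 := by
  have h1 := Amin_pos A hA0 hrow
  have h2 : (1:ℝ) ≤ U := by exact_mod_cast Nat.one_le_iff_ne_zero.mpr (NeZero.ne U)
  have h3 : (1:ℝ) ≤ X := by exact_mod_cast Nat.one_le_iff_ne_zero.mpr (NeZero.ne X)
  rw [amin, div_lt_one (mul_pos (by linarith) (by linarith))]
  nlinarith [mul_nonneg (by linarith : (0:ℝ) ≤ (U:ℝ) - 1) (by linarith : (0:ℝ) ≤ (X:ℝ) + Amin A)]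

/-- Any L1-normalized vector in the left null space of `A` has an entry `≤ -amin A`. -/
lemma neg_entry {U X : ℕ} [NeZero U] [NeZero X] (A : Matrix (Fin U) (Fin X) ℝ)
    (hA0 : ∀ i j, 0 ≤ A i j) (hcol : ∀ j, ∑ i, A i j = 1) (hrow : ∀ i, ∃ j, A i j ≠ 0)
    (ω : Fin U → ℝ) (hnorm : ∑ j, |ω j| = 1) (hnull : ∀ j, ∑ k, ω k * A k j = 0) :
    ∃ p, ω p ≤ -(amin A) := by
  have hU : (0:ℝ) < U := Ucast_pos
  have hAmin : 0 < Amin A := Amin_pos A hA0 hrow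
  have hXA : (0:ℝ) < (X:ℝ) + Amin A := by
    have : (0:ℝ) ≤ X := Nat.cast_nonneg X
    linarith
  have haminpos : 0 < amin A := amin_pos A hA0 hrow
  set r : Fin U → ℝ := fun k => ∑ j, A k j with hr
  have hrlb : ∀ k, Amin A ≤ r k := fun k => Finset.inf'_le _ (Finset.mem_univ k)
  have hA1 : ∀ k j, A k j ≤ 1 := by
    intro k j
    have h := Finset.single_le_sum (f := fun i => A i j) (fun i _ => hA0 i j) (Finset.mem_univ k)
    rw [hcol j] at h
    exact h
  have hrub : ∀ k, r k ≤ X := by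
    intro k
    calc r k ≤ ∑ _j : Fin X, (1:ℝ) := Finset.sum_le_sum (fun j _ => hA1 k j)
    _ = X := by simp
  have h0 : ∑ k, ω k * r k = 0 := by
    have h : ∑ k, ω k * r k = ∑ j, ∑ k, ω k * A k j := by
      simp_rw [hr, Finset.mul_sum]
      exact Finset.sum_comm
    rw [h]
    simp [hnull]
  have hmax : ∀ x:ℝ, max x 0 - max (-x) 0 = x := by
    intro x; rcases le_total x 0 with h|h
    · rw [max_eq_right h, max_eq_left (by linarith : (0:ℝ) ≤ -x)]; ring
    · rw [max_eq_left h, max_eq_right (by linarith : -x ≤ 0)]; ring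
  have habs : ∀ x:ℝ, max x 0 + max (-x) 0 = |x| := by
    intro x; rcases le_total x 0 with h|h
    · rw [max_eq_right h, max_eq_left (by linarith : (0:ℝ) ≤ -x), abs_of_nonpos h]; ring
    · rw [max_eq_left h, max_eq_right (by linarith : -x ≤ 0), abs_of_nonneg h]; ring
  set P := ∑ k, max (ω k) 0 with hP
  set N := ∑ k, max (-(ω k)) 0 with hN
  have hPN : P + N = 1 := by
    rw [hP, hN, ← Finset.sum_add_distrib]
    simp_rw [habs]
    exact hnorm
  have hbal : ∑ k, max (ω k) 0 * r k = ∑ k, max (-(ω k)) 0 * r k := by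
    have h : ∑ k, (max (ω k) 0 * r k - max (-(ω k)) 0 * r k) = 0 := by
      simp_rw [← sub_mul, hmax]
      exact h0
    rw [Finset.sum_sub_distrib] at h
    linarith
  have hPl : Amin A * P ≤ ∑ k, max (ω k) 0 * r k := by
    rw [hP, Finset.mul_sum]
    apply Finset.sum_le_sum
    intro k _
    have h := mul_le_mul_of_nonneg_left (hrlb k) (le_max_right (ω k) 0)
    linarith [mul_comm (Amin A) (max (ω k) 0)]
  have hNu : ∑ k, max (-(ω k)) 0 * r k ≤ (X:ℝ) * N := by
    rw [hN, Finset.mul_sum]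
    apply Finset.sum_le_sum
    intro k _
    have h := mul_le_mul_of_nonneg_left (hrub k) (le_max_right (-(ω k)) 0)
    linarith [mul_comm (X:ℝ) (max (-(ω k)) 0)]
  have hNlb : Amin A / ((X:ℝ) + Amin A) ≤ N := by
    rw [div_le_iff₀ hXA]
    nlinarith
  have hex : ∃ k, N / U ≤ max (-(ω k)) 0 := by
    by_contra hcon
    push_neg at hcon
    have hlt : ∑ k, max (-(ω k)) 0 < ∑ _k : Fin U, N / (U:ℝ) :=
      Finset.sum_lt_sum_of_nonempty Finset.univ_nonempty (fun k _ => hcon k)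
    rw [Finset.sum_const, Finset.card_univ, Fintype.card_fin, nsmul_eq_mul] at hlt
    rw [mul_div_cancel₀ _ (ne_of_gt hU)] at hlt
    exact lt_irrefl _ (hN ▸ hlt)
  obtain ⟨k, hk⟩ := hex
  have hamin_le : amin A ≤ N / U := by
    have heq : amin A = Amin A / ((X:ℝ) + Amin A) / (U:ℝ) := by
      rw [amin, div_div]
      ring_nf
    rw [heq]
    exact div_le_div_of_nonneg_right hNlb hU.le
  have hfin : amin A ≤ max (-(ω k)) 0 := le_trans hamin_le hk
  refine ⟨k, ?_⟩
  rcases le_max_iff.mp hfin with h|h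
  · linarith
  · linarith

set_option maxHeartbeats 2000000 in
theorem stmt_3 {U X : ℕ} [NeZero U] [NeZero X]
    (A : Matrix (Fin U) (Fin X) ℝ)
    (hA0 : ∀ i j, 0 ≤ A i j)
    (hcol : ∀ j, ∑ i, A i j = 1)
    (hrow : ∀ i, ∃ j, A i j ≠ 0)
    (n : ℕ) (hn2 : 2 ≤ n) (hnU : n ≤ U)
    (a : ℝ) (ha1 : amin A ≤ a) (ha2 : a ≤ 1)
    (εs ε εn1 : ℝ) (hεs0 : 0 ≤ εs) (hεs : εs < amin A) (hε0 : 0 < ε) (hεn1 : 0 < εn1)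
    (e' : ℝ)
    (he'def : e' = (ε + εs) / (amin A - εs) +
      ((n : ℝ) - 1) * (ε + εn1 + εs + εs * εn1) / (a * (amin A - εs)))
    (he' : e' < amin A)
    -- (i) the `(a, ε_{n-1})`-diagonal polarized matrix with L1-normalized rows in
    -- the left null space of `A`
    (Υ : Fin (n - 1) → Fin U → ℝ)
    (hΥnorm : ∀ i, ∑ j, |Υ i j| = 1)
    (hΥnull : ∀ i j, ∑ k, Υ i k * A k j = 0)
    (hΥdiag : ∀ i : Fin (n - 1), a ≤ Υ i ⟨(i : ℕ), by have := i.isLt; omega⟩)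
    (hΥzero : ∀ (i : Fin (n - 1)) (j : Fin U), (j : ℕ) < n - 1 → (j : ℕ) ≠ (i : ℕ) → Υ i j = 0)
    (hΥoff : ∀ (i : Fin (n - 1)) (j : Fin U), n - 1 ≤ (j : ℕ) → Υ i j ≤ εn1)
    -- (ii) the L1-normalized `(a, ε)`-polarized (at `n`) vector in the left null
    -- space of `A`, `ε_s`-dependent on the rows of `Υ`
    (υ : Fin U → ℝ)
    (hυnorm : ∑ j, |υ j| = 1)
    (hυnull : ∀ j, ∑ k, υ k * A k j = 0)
    (hυpol : a ≤ υ ⟨n - 1, by omega⟩)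
    (hυoff : ∀ j : Fin U, (j : ℕ) ≠ n - 1 → υ j ≤ ε)
    (hdep : ∃ c : Fin (n - 1) → ℝ, ∑ j, |υ j - ∑ i, c i * Υ i j| ≤ εs) :
    ∀ ε' : ℝ, e' ≤ ε' → ε' < amin A →
      ∃ (ω : Fin U → ℝ) (m : Fin U), (m : ℕ) < n - 1 ∧
        (∑ j, |ω j| = 1) ∧
        (∀ j, ∑ k, ω k * A k j = 0) ∧
        amin A ≤ ω m ∧
        ω ⟨n - 1, by omega⟩ ≤ -(amin A) ∧
        ∀ j : Fin U, j ≠ m → (j : ℕ) ≠ n - 1 → |ω j| ≤ ε' := by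
  intro ε' hε'low hε'high
  obtain ⟨c, hc⟩ := hdep
  have hα : 0 < amin A := amin_pos A hA0 hrow
  have hα1 : amin A < 1 := amin_lt_one A hA0 hrow
  have ha0 : 0 < a := lt_of_lt_of_le hα ha1
  have haε : 0 < amin A - εs := by linarith
  have hn' : (1:ℝ) ≤ (n:ℝ) - 1 := by
    have h : (2:ℝ) ≤ (n:ℝ) := by exact_mod_cast hn2
    linarith
  have hn1U : n - 1 < U := by omega
  set nn : Fin U := ⟨n - 1, hn1U⟩ with hnn_def
  set fc : Fin (n - 1) → Fin U := fun i => ⟨(i : ℕ), lt_trans i.isLt hn1U⟩ with hfc_def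
  have hυpol' : a ≤ υ nn := hυpol
  have hdj : ∀ j, |υ j - ∑ i, c i * Υ i j| ≤ εs := fun j =>
    le_trans (Finset.single_le_sum (f := fun j => |υ j - ∑ i, c i * Υ i j|)
      (fun _ _ => abs_nonneg _) (Finset.mem_univ j)) hc
  have hΥ1 : ∀ i j, |Υ i j| ≤ 1 := by
    intro i j
    have h := Finset.single_le_sum (f := fun j => |Υ i j|) (fun _ _ => abs_nonneg _)
      (Finset.mem_univ j)
    rw [hΥnorm i] at h
    exact h
  have hΥd : ∀ i : Fin (n-1), a ≤ Υ i (fc i) := fun i => hΥdiag i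
  have hcoord : ∀ i : Fin (n-1), ∑ k, c k * Υ k (fc i) = c i * Υ i (fc i) := by
    intro i
    apply Finset.sum_eq_single
    · intro k _ hk
      rw [hΥzero k (fc i) i.isLt
        (fun hh => hk (Fin.val_injective (show (k:ℕ) = (i:ℕ) from hh.symm))), mul_zero]
    · intro hmem
      exact absurd (Finset.mem_univ i) hmem
  have hcpos : ∀ i : Fin (n-1), 0 ≤ c i → c i ≤ (ε + εs)/a := by
    intro i hci
    have h1 := abs_le.mp (hdj (fc i))
    rw [hcoord i] at h1
    have h2 : υ (fc i) ≤ ε := hυoff (fc i) (show (i:ℕ) ≠ n - 1 by have := i.isLt; omega)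
    have h3 : a ≤ Υ i (fc i) := hΥd i
    have h4 : c i * a ≤ c i * Υ i (fc i) := mul_le_mul_of_nonneg_left h3 hci
    rw [le_div_iff₀ ha0]
    linarith [h1.1]
  -- the sum of |c i| is bounded
  have hfc_inj : ∀ x ∈ Finset.univ, ∀ y ∈ Finset.univ, fc x = fc y → x = y := by
    intro x _ y _ h
    have h2 := congrArg Fin.val h
    exact Fin.val_injective h2
  have hnn_not : nn ∉ Finset.image fc Finset.univ := by
    rw [Finset.mem_image]
    rintro ⟨i, -, hi⟩
    have h : (i:ℕ) = n - 1 := congrArg Fin.val hi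
    have h2 := i.isLt
    omega
  have himgυ : ∑ i : Fin (n-1), |υ (fc i)| ≤ 1 - a := by
    have h1 : ∑ j ∈ Finset.image fc Finset.univ, |υ j| = ∑ i, |υ (fc i)| :=
      Finset.sum_image hfc_inj
    have h2 : ∑ j ∈ insert nn (Finset.image fc Finset.univ), |υ j| ≤ ∑ j, |υ j| :=
      Finset.sum_le_sum_of_subset_of_nonneg (Finset.subset_univ _) (fun _ _ _ => abs_nonneg _)
    rw [Finset.sum_insert hnn_not, h1, hυnorm] at h2
    have h3 : a ≤ |υ nn| := le_trans hυpol' (le_abs_self _)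
    linarith
  have himgd : ∑ i : Fin (n-1), |υ (fc i) - ∑ k, c k * Υ k (fc i)| ≤ εs := by
    have h1 : ∑ j ∈ Finset.image fc Finset.univ, |υ j - ∑ k, c k * Υ k j| =
        ∑ i, |υ (fc i) - ∑ k, c k * Υ k (fc i)| := Finset.sum_image hfc_inj
    have h2 : ∑ j ∈ Finset.image fc Finset.univ, |υ j - ∑ k, c k * Υ k j| ≤
        ∑ j, |υ j - ∑ k, c k * Υ k j| :=
      Finset.sum_le_sum_of_subset_of_nonneg (Finset.subset_univ _) (fun _ _ _ => abs_nonneg _)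
    rw [h1] at h2
    linarith [hc]
  have hsumc : ∑ i, |c i| ≤ (1 - a + εs)/a := by
    have hterm : ∀ i : Fin (n-1),
        |c i| * a ≤ |υ (fc i)| + |υ (fc i) - ∑ k, c k * Υ k (fc i)| := by
      intro i
      have h3 : a ≤ Υ i (fc i) := hΥd i
      have h4 : |c i| * a ≤ |c i| * Υ i (fc i) := mul_le_mul_of_nonneg_left h3 (abs_nonneg _)
      have h5 : |c i| * Υ i (fc i) = |c i * Υ i (fc i)| := by
        rw [abs_mul, abs_of_nonneg (le_trans ha0.le h3)]
      have h6 : |c i * Υ i (fc i)| ≤ |υ (fc i)| + |υ (fc i) - c i * Υ i (fc i)| := by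
        have h := abs_add_le (υ (fc i)) (c i * Υ i (fc i) - υ (fc i))
        have h' : υ (fc i) + (c i * Υ i (fc i) - υ (fc i)) = c i * Υ i (fc i) := by ring
        rw [h'] at h
        rw [abs_sub_comm (c i * Υ i (fc i)) (υ (fc i))] at h
        linarith
      rw [hcoord i]
      linarith
    have hs1 : (∑ i, |c i|) * a = ∑ i, |c i| * a := by rw [Finset.sum_mul]
    have hs2 : ∑ i, |c i| * a ≤
        ∑ i, (|υ (fc i)| + |υ (fc i) - ∑ k, c k * Υ k (fc i)|) :=
      Finset.sum_le_sum (fun i _ => hterm i)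
    rw [Finset.sum_add_distrib] at hs2
    rw [le_div_iff₀ ha0]
    linarith
  -- the per-row bounds B
  set B : Fin (n-1) → ℝ := fun i => (ε + εs)/a + |c i| * εn1 with hB_def
  have hBnn : ∀ i, 0 ≤ B i := fun i =>
    add_nonneg (div_nonneg (by linarith) ha0.le) (mul_nonneg (abs_nonneg _) hεn1.le)
  have hB : ∀ (i : Fin (n-1)) (j : Fin U), n - 1 ≤ (j:ℕ) → -(B i) ≤ c i * Υ i j := by
    intro i j hj
    show -((ε + εs)/a + |c i| * εn1) ≤ c i * Υ i j
    rcases le_or_gt 0 (c i) with hci | hci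
    · have h1 : -(1:ℝ) ≤ Υ i j := by linarith [(abs_le.mp (hΥ1 i j)).1]
      have h2 : c i * (-1) ≤ c i * Υ i j := mul_le_mul_of_nonneg_left h1 hci
      have h3 := hcpos i hci
      have h4 : 0 ≤ |c i| * εn1 := mul_nonneg (abs_nonneg _) hεn1.le
      linarith
    · have h1 : Υ i j ≤ εn1 := hΥoff i j hj
      have h2 : c i * εn1 ≤ c i * Υ i j := mul_le_mul_of_nonpos_left h1 hci.le
      have h5 : |c i| * εn1 = -(c i * εn1) := by rw [abs_of_neg hci]; ring
      have h4 : 0 ≤ (ε+εs)/a := div_nonneg (by linarith) ha0.le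
      linarith
  have hcast : ((n-1:ℕ):ℝ) = (n:ℝ) - 1 := by
    rw [Nat.cast_sub (by omega : 1 ≤ n), Nat.cast_one]
  have hBsum_eq : ∑ i, B i = ((n-1:ℕ):ℝ) * ((ε + εs)/a) + (∑ i, |c i|) * εn1 := by
    simp only [hB_def]
    rw [Finset.sum_add_distrib, Finset.sum_const, ← Finset.sum_mul, Finset.card_univ,
      Fintype.card_fin, nsmul_eq_mul]
  have hEq : e' * (amin A - εs) = (ε + εs) + ((n:ℝ)-1) * ((ε+εs) + εn1*(1+εs)) / a := by
    rw [he'def]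
    field_simp
    ring
  have hSB : ∑ i, B i ≤ e' * (amin A - εs) - (ε + εs) := by
    have hin : (0:ℝ) ≤ ((n:ℝ)-1)*(1+εs) - (1-a+εs) := by
      nlinarith [mul_nonneg (by linarith : (0:ℝ) ≤ (n:ℝ)-2) (by linarith : (0:ℝ) ≤ 1+εs)]
    have hkey : ((n:ℝ)-1) * (ε+εs) + (1-a+εs) * εn1 ≤ ((n:ℝ)-1) * ((ε+εs) + εn1*(1+εs)) := by
      nlinarith [mul_nonneg hεn1.le hin]
    have h1 : (∑ i, |c i|) * εn1 ≤ ((1 - a + εs)/a) * εn1 :=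
      mul_le_mul_of_nonneg_right hsumc hεn1.le
    have h2 : ((n:ℝ)-1) * ((ε+εs)/a) + ((1-a+εs)/a) * εn1 =
        (((n:ℝ)-1) * (ε+εs) + (1-a+εs) * εn1)/a := by ring
    have h3 : (((n:ℝ)-1) * (ε+εs) + (1-a+εs) * εn1)/a ≤
        (((n:ℝ)-1) * ((ε+εs) + εn1*(1+εs)))/a := by
      exact div_le_div_of_nonneg_right hkey ha0.le
    rw [hBsum_eq, hcast]
    have h4 : ((n:ℝ)-1) * ((ε+εs) + εn1*(1+εs)) / a =
        (((n:ℝ)-1) * ((ε+εs) + εn1*(1+εs)))/a := by ring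
    linarith [hEq, h1, h2, h3, h4]
  have he'pos : 0 < e' := by
    rw [he'def]
    have h1 : 0 < (ε + εs)/(amin A - εs) := div_pos (by linarith) haε
    have h2 : 0 ≤ ((n:ℝ)-1) * (ε + εn1 + εs + εs*εn1) / (a*(amin A - εs)) := by
      apply div_nonneg
      · apply mul_nonneg (by linarith)
        nlinarith [mul_nonneg hεs0 hεn1.le]
      · exact (mul_pos ha0 haε).le
    linarith
  have hεn1e' : εn1 ≤ e' := by
    have hle1 : a * (amin A - εs) ≤ 1 :=
      mul_le_one₀ ha2 haε.le (by linarith)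
    have h2 : εn1 * (a * (amin A - εs)) ≤ ((n:ℝ)-1) * (ε + εn1 + εs + εs * εn1) := by
      nlinarith [mul_le_mul_of_nonneg_left hle1 hεn1.le,
        mul_nonneg (by linarith : (0:ℝ) ≤ (n:ℝ)-1-1)
          (by nlinarith [mul_nonneg hεs0 hεn1.le] : (0:ℝ) ≤ ε + εn1 + εs + εs*εn1),
        mul_nonneg hεs0 hεn1.le]
    have h3 : εn1 ≤ ((n:ℝ)-1) * (ε + εn1 + εs + εs * εn1) / (a * (amin A - εs)) := by
      rw [le_div_iff₀ (mul_pos ha0 haε)]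
      linarith
    have h4 : 0 ≤ (ε + εs)/(amin A - εs) := div_nonneg (by linarith) haε.le
    rw [he'def]
    linarith
  have hchain : εs + ∑ i, B i < amin A := by
    have h2 : e' * (amin A - εs) ≤ e' * amin A :=
      mul_le_mul_of_nonneg_left (by linarith) he'pos.le
    have h3 : e' * amin A < amin A := by
      nlinarith [mul_pos hα (show (0:ℝ) < 1 - e' by linarith)]
    linarith [hSB, hε0]
  have hυlow : ∀ j : Fin U, n - 1 ≤ (j:ℕ) → -(εs + ∑ i, B i) ≤ υ j := by
    intro j hj
    have h2 := abs_le.mp (hdj j)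
    have h3 : ∑ i, (-(B i)) ≤ ∑ i, c i * Υ i j := Finset.sum_le_sum (fun i _ => hB i j hj)
    have h6 : ∑ i, (-(B i)) = -(∑ i, B i) := by
      rw [Finset.sum_neg_distrib]
    linarith [h2.1]
  -- the big negative entry of υ
  obtain ⟨p, hp⟩ := neg_entry A hA0 hcol hrow υ hυnorm hυnull
  rcases Nat.lt_trichotomy ((p:ℕ)) (n-1) with hcase | hcase | hcase
  · -- the main case: p < n-1
    set m' : Fin (n-1) := ⟨(p:ℕ), hcase⟩ with hm'_def
    have hfm : fc m' = p := rfl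
    have hcmprod : c m' * Υ m' p ≤ -(amin A) + εs := by
      have h1 := hcoord m'
      rw [hfm] at h1
      have h2 := abs_le.mp (hdj p)
      rw [h1] at h2
      linarith [h2.1]
    have hΥmp : a ≤ Υ m' p := hΥd m'
    have hΥmp1 : Υ m' p ≤ 1 := (abs_le.mp (hΥ1 m' p)).2
    have hcmneg : c m' < 0 := by
      by_contra hcon
      push_neg at hcon
      have h : 0 ≤ c m' * Υ m' p := mul_nonneg hcon (by linarith)
      linarith
    have hcmbig : amin A - εs ≤ -(c m') := by
      nlinarith [mul_nonneg (by linarith : (0:ℝ) ≤ -(c m'))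
        (by linarith : (0:ℝ) ≤ 1 - Υ m' p)]
    have hup : ∀ j : Fin U, n - 1 < (j:ℕ) → c m' * Υ m' j ≤ e' * (amin A - εs) := by
      intro j hj
      have hsplit : c m' * Υ m' j + ∑ i ∈ Finset.univ.erase m', c i * Υ i j =
          ∑ i, c i * Υ i j :=
        Finset.add_sum_erase _ (fun i => c i * Υ i j) (Finset.mem_univ m')
      have h1 : υ j ≤ ε := hυoff j (by omega)
      have h5 := abs_le.mp (hdj j)
      have h3 : ∑ i ∈ Finset.univ.erase m', (-(B i)) ≤
          ∑ i ∈ Finset.univ.erase m', c i * Υ i j :=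
        Finset.sum_le_sum (fun i _ => hB i j (le_of_lt hj))
      have h4 : ∑ i ∈ Finset.univ.erase m', B i ≤ ∑ i, B i :=
        Finset.sum_le_sum_of_subset_of_nonneg (Finset.erase_subset _ _)
          (fun i _ _ => hBnn i)
      have h6 : ∑ i ∈ Finset.univ.erase m', (-(B i)) =
          -(∑ i ∈ Finset.univ.erase m', B i) := by
        rw [Finset.sum_neg_distrib]
      linarith [hSB, h5.1]
    have hlow : ∀ j : Fin U, n - 1 < (j:ℕ) → -e' ≤ Υ m' j := by
      intro j hj
      rcases le_or_gt 0 (Υ m' j) with hΥj | hΥj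
      · linarith
      · have h1 := hup j hj
        nlinarith [mul_le_mul_of_nonneg_right hcmbig (by linarith : (0:ℝ) ≤ -(Υ m' j))]
    obtain ⟨q, hq⟩ := neg_entry A hA0 hcol hrow (Υ m') (hΥnorm m') (hΥnull m')
    have hend : Υ m' nn ≤ -(amin A) := by
      rcases Nat.lt_trichotomy ((q:ℕ)) (n-1) with h1 | h1 | h1
      · exfalso
        by_cases h2 : (q:ℕ) = (p:ℕ)
        · have hqp : q = p := Fin.val_injective h2
          rw [hqp] at hq
          linarith
        · have h3 : Υ m' q = 0 := hΥzero m' q h1 h2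
          rw [h3] at hq
          linarith
      · have hqn : q = nn := Fin.val_injective h1
        rwa [hqn] at hq
      · exfalso
        have h2 := hlow q h1
        linarith
    refine ⟨Υ m', p, hcase, hΥnorm m', hΥnull m', le_trans ha1 hΥmp, hend, ?_⟩
    intro j hjp hjn
    rcases Nat.lt_trichotomy ((j:ℕ)) (n-1) with h1 | h1 | h1
    · have h3 : Υ m' j = 0 := hΥzero m' j h1 (fun hh => hjp (Fin.val_injective hh))
      rw [h3, abs_zero]
      linarith
    · exact absurd h1 hjn
    · refine abs_le.mpr ⟨?_, ?_⟩
      · linarith [hlow j h1]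
      · linarith [hΥoff m' j (le_of_lt h1)]
  · -- impossible: p = n-1
    exfalso
    have hpnn : p = nn := Fin.val_injective hcase
    rw [hpnn] at hp
    linarith
  · -- impossible: p > n-1
    exfalso
    have h1 := hυlow p (le_of_lt hcase)
    linarith
end

section
/- Let 0 < a_min < 1 and 2 ≤ n ≤ |U|. Define ã_{n-1} = a_min² (1 + (n-1)/a_min)^{-1}. Let ε_s and ε be positive constants, and set ε_i = ε (2/(ã_{n-1} ε_s))^{i-1} for i = 1,…,n. Assume ε_s < a_min² ã_{n-1} · { a_min²[1 + (a_min ã_{n-1}/2)^{n-1}] + (n-1)(1+a_min) ã_{n-1}²/2 + a_min ã_{n-1} }^{-1} and ε < a_min (ã_{n-1} ε_s/2)^{n-1}. Then: (1) ε_1 ≤ ε_2 ≤ ⋯ ≤ ε_n < a_min; (2) for each i = 2,…,n, ε'_i := (ε+ε_s)/(a_min-ε_s) + (i-1)(ε+ε_{i-1}+ε_s+ε_s ε_{i-1})/(a(a_min-ε_s)) < a_min for any a ≥ a_min; (3) for each i = 2,…,n, ε''_i := ε_{i-1}/a + (1/(a_min a ε_s))[ε + (i-1)(ε+ε_{i-1})/a]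 ≤ ε_i for any a ≥ a_min. -/
open Finset

set_option maxHeartbeats 1000000

private lemma stmt_5_key_aux (amin εs ε ta N e P : ℝ)
    (hA : ε * (ta * (amin + N)) = ε * amin ^ 3)
    (hB : εs * (ta * (amin + N)) = εs * amin ^ 3)
    (hC : amin ^ 3 * ε < amin ^ 3 * (εs * P))
    (hD2 : ta * N * (e + εs * e) < ta * N * (amin * ta * εs / 2 * (1 + amin)))
    (hyp' : εs * (amin ^ 2 * (1 + P) + N * (1 + amin) * ta ^ 2 / 2 + amin * ta) * amin <
      amin ^ 2 * ta * amin) :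
    ta * (amin * (ε + εs) + N * (ε + e + εs + εs * e) + amin ^ 2 * εs) < ta * amin ^ 3 := by
  linarith [hA, hB, hC, hD2, hyp']

theorem stmt_5 (U n : ℕ) (hn2 : 2 ≤ n) (hnU : n ≤ U)
    (amin : ℝ) (hamin0 : 0 < amin) (hamin1 : amin < 1)
    (εs ε : ℝ) (hεs0 : 0 < εs) (hε0 : 0 < ε)
    (ta : ℝ) (hta : ta = amin ^ 2 * (1 + ((n : ℝ) - 1) / amin)⁻¹)
    (εseq : ℕ → ℝ) (hεseq : ∀ i, εseq i = ε * (2 / (ta * εs)) ^ (i - 1))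
    (hεsbound : εs < amin ^ 2 * ta *
      (amin ^ 2 * (1 + (amin * ta / 2) ^ (n - 1)) +
        ((n : ℝ) - 1) * (1 + amin) * ta ^ 2 / 2 + amin * ta)⁻¹)
    (hεbound : ε < amin * (ta * εs / 2) ^ (n - 1)) :
    -- (1)  ε₁ ≤ ε₂ ≤ ⋯ ≤ εₙ < a_min
    (∀ i : ℕ, 1 ≤ i → i < n → εseq i ≤ εseq (i + 1)) ∧ εseq n < amin ∧
    -- (2)  ε'_i < a_min for i = 2, …, n and all a_min ≤ a ≤ 1
    (∀ i : ℕ, 2 ≤ i → i ≤ n → ∀ a : ℝ, amin ≤ a → a ≤ 1 →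
      (ε + εs) / (amin - εs) +
        ((i : ℝ) - 1) * (ε + εseq (i - 1) + εs + εs * εseq (i - 1)) / (a * (amin - εs))
        < amin) ∧
    -- (3)  ε''_i ≤ ε_i for i = 2, …, n and all a_min ≤ a ≤ 1
    (∀ i : ℕ, 2 ≤ i → i ≤ n → ∀ a : ℝ, amin ≤ a → a ≤ 1 →
      εseq (i - 1) / a + (1 / (amin * a * εs)) * (ε + ((i : ℝ) - 1) * (ε + εseq (i - 1)) / a)
        ≤ εseq i) := by
  -- basic abbreviations and facts
  set N : ℝ := (n : ℝ) - 1 with hN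
  have hn2' : (2:ℝ) ≤ (n:ℝ) := by exact_mod_cast hn2
  have hN1 : (1:ℝ) ≤ N := by simp only [hN]; linarith
  have hN0 : (0:ℝ) < N := by linarith
  have hd0 : 0 < 1 + N / amin := by
    have : 0 ≤ N / amin := div_nonneg hN0.le hamin0.le
    linarith
  have hta0 : 0 < ta := by
    rw [hta]; exact mul_pos (pow_pos hamin0 2) (inv_pos.mpr hd0)
  have htaN : ta * (amin + N) = amin ^ 3 := by
    rw [hta]
    field_simp
  have hta1 : ta < 1 := by nlinarith [htaN, hamin0, hN1, hta0]
  -- positivity of the big denominator in hεsbound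
  have hP0 : 0 < (amin * ta / 2) ^ (n - 1) := pow_pos (by positivity) _
  have hD0 : 0 < amin ^ 2 * (1 + (amin * ta / 2) ^ (n - 1)) +
      N * (1 + amin) * ta ^ 2 / 2 + amin * ta := by
    have h1 : 0 < amin ^ 2 * (1 + (amin * ta / 2) ^ (n - 1)) := by nlinarith [hP0]
    have h2 : 0 < N * (1 + amin) * ta ^ 2 / 2 :=
      div_pos (mul_pos (mul_pos hN0 (by linarith : (0:ℝ) < 1 + amin)) (pow_pos hta0 2)) two_pos
    nlinarith [mul_pos hamin0 hta0]
  have hεsD : εs * (amin ^ 2 * (1 + (amin * ta / 2) ^ (n - 1)) +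
      N * (1 + amin) * ta ^ 2 / 2 + amin * ta) < amin ^ 2 * ta := by
    have h' : εs < amin ^ 2 * ta / (amin ^ 2 * (1 + (amin * ta / 2) ^ (n - 1)) +
        N * (1 + amin) * ta ^ 2 / 2 + amin * ta) := by
      rw [div_eq_mul_inv]; exact hεsbound
    rw [lt_div_iff₀ hD0] at h'
    exact h'
  have hεsa : εs < amin := by
    have hx1 : 0 ≤ εs * (amin ^ 2 * (1 + (amin * ta / 2) ^ (n - 1))) :=
      mul_nonneg hεs0.le (by nlinarith [hP0])
    have hx2 : 0 ≤ εs * (N * (1 + amin) * ta ^ 2 / 2) :=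
      mul_nonneg hεs0.le (by positivity)
    nlinarith [hεsD, hx1, hx2, mul_pos hamin0 hta0]
  have hεs1 : εs < 1 := hεsa.trans hamin1
  have hts1 : ta * εs < 1 := by
    have h := mul_lt_mul_of_pos_left hεs1 hta0
    rw [mul_one] at h
    linarith
  have hts0 : 0 < ta * εs := mul_pos hta0 hεs0
  have hr0 : (0:ℝ) < 2 / (ta * εs) := by positivity
  have hr1 : (1:ℝ) ≤ 2 / (ta * εs) := by
    rw [le_div_iff₀ hts0]; linarith
  have hrta : ta * εs / 2 * (2 / (ta * εs)) = 1 := by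
    field_simp
  -- Part (1b) : εseq n < amin
  have h1b : ε * (2 / (ta * εs)) ^ (n - 1) < amin := by
    calc ε * (2 / (ta * εs)) ^ (n - 1)
        < amin * (ta * εs / 2) ^ (n - 1) * (2 / (ta * εs)) ^ (n - 1) :=
          mul_lt_mul_of_pos_right hεbound (pow_pos hr0 _)
      _ = amin * (ta * εs / 2 * (2 / (ta * εs))) ^ (n - 1) := by
          rw [mul_pow]; ring
      _ = amin := by rw [hrta, one_pow, mul_one]
  -- key bound hQP : amin * Q ≤ εs * P
  have hQP : amin * (ta * εs / 2) ^ (n - 1) ≤ εs * (amin * ta / 2) ^ (n - 1) := by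
    obtain ⟨k, hk⟩ : ∃ k, n - 1 = k + 1 := ⟨n - 2, by omega⟩
    rw [hk, pow_succ, pow_succ]
    have h2 : (ta * εs / 2) ^ k ≤ (amin * ta / 2) ^ k :=
      pow_le_pow_left₀ (by positivity) (by nlinarith) k
    have h3 := mul_le_mul_of_nonneg_left h2 (show (0:ℝ) ≤ amin * ta * εs / 2 by positivity)
    nlinarith [h3]
  -- the main cleared inequality used for part (2)
  have hG : ∀ e : ℝ, 0 < e → ε ≤ e → e < amin * ta * εs / 2 →
      amin * (ε + εs) + N * (ε + e + εs + εs * e) < amin ^ 3 - amin ^ 2 * εs := by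
    intro e he0 hεe heb2
    have hA : ε * (ta * (amin + N)) = ε * amin ^ 3 := by rw [htaN]
    have hB : εs * (ta * (amin + N)) = εs * amin ^ 3 := by rw [htaN]
    have hC : amin ^ 3 * ε < amin ^ 3 * (εs * (amin * ta / 2) ^ (n - 1)) :=
      mul_lt_mul_of_pos_left (lt_of_lt_of_le hεbound hQP) (by positivity)
    have hD1 : e + εs * e < amin * ta * εs / 2 * (1 + amin) := by
      have ha : εs * e < εs * (amin * ta * εs / 2) := mul_lt_mul_of_pos_left heb2 hεs0
      have hb : 0 < amin * ta * εs * (amin - εs) :=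
        mul_pos (mul_pos (mul_pos hamin0 hta0) hεs0) (sub_pos.mpr hεsa)
      linarith [heb2, ha, hb]
    have hD2 : ta * N * (e + εs * e) < ta * N * (amin * ta * εs / 2 * (1 + amin)) :=
      mul_lt_mul_of_pos_left hD1 (mul_pos hta0 hN0)
    have hyp' := mul_lt_mul_of_pos_right hεsD hamin0
    have key : ta * (amin * (ε + εs) + N * (ε + e + εs + εs * e) + amin ^ 2 * εs)
        < ta * amin ^ 3 :=
      stmt_5_key_aux amin εs ε ta N e ((amin * ta / 2) ^ (n - 1)) hA hB hC hD2 hyp'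
    have := (mul_lt_mul_iff_right₀ hta0).mp key
    linarith
  refine ⟨?_, ?_, ?_, ?_⟩
  · -- part (1a)
    intro i hi1 hin
    rw [hεseq, hεseq]
    have : i + 1 - 1 = i := by omega
    rw [this]
    exact mul_le_mul_of_nonneg_left (pow_le_pow_right₀ hr1 (Nat.sub_le i 1)) hε0.le
  · -- part (1b)
    rw [hεseq]; exact h1b
  · -- part (2)
    intro i hi2 hin a haa ha1
    obtain ⟨m, rfl⟩ : ∃ m, i = m + 2 := ⟨i - 2, by omega⟩
    have hie : εseq (m + 2 - 1) = ε * (2 / (ta * εs)) ^ m := by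
      rw [show m + 2 - 1 = m + 1 from rfl, hεseq, Nat.add_sub_cancel]
    set e : ℝ := εseq (m + 2 - 1) with hedef
    have he0 : 0 < e := by rw [hie]; positivity
    have hεe : ε ≤ e := by
      rw [hie]
      have h1 := pow_le_pow_right₀ hr1 (Nat.zero_le m)
      rw [pow_zero] at h1
      exact le_mul_of_one_le_right hε0.le h1
    have heb : e * (2 / (ta * εs)) < amin := by
      rw [hie]
      calc ε * (2 / (ta * εs)) ^ m * (2 / (ta * εs)) = ε * (2 / (ta * εs)) ^ (m + 1) := by
            rw [pow_succ]; ring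
        _ ≤ ε * (2 / (ta * εs)) ^ (n - 1) :=
            mul_le_mul_of_nonneg_left (pow_le_pow_right₀ hr1 (by omega)) hε0.le
        _ < amin := h1b
    have heb2 : e < amin * ta * εs / 2 := by
      have h1 : e = e * (2 / (ta * εs)) * (ta * εs / 2) := by
        field_simp
      rw [h1]
      calc e * (2 / (ta * εs)) * (ta * εs / 2) < amin * (ta * εs / 2) :=
            mul_lt_mul_of_pos_right heb (by positivity)
        _ = amin * ta * εs / 2 := by ring
    have hc : 0 < amin - εs := sub_pos.mpr hεsa
    have ha0 : 0 < a := lt_of_lt_of_le hamin0 haa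
    have hM0 : 0 < ε + e + εs + εs * e := by
      have : 0 < εs * e := mul_pos hεs0 he0
      linarith
    have hIN : ((m + 2 : ℕ) : ℝ) - 1 ≤ N := by
      have : ((m + 2 : ℕ) : ℝ) ≤ (n : ℝ) := by exact_mod_cast hin
      simp only [hN]; push_cast at *; linarith
    have hI1 : (1:ℝ) ≤ ((m + 2 : ℕ) : ℝ) - 1 := by push_cast; linarith
    have hstep : (((m + 2 : ℕ) : ℝ) - 1) * (ε + e + εs + εs * e) / (a * (amin - εs))
        ≤ N * (ε + e + εs + εs * e) / (amin * (amin - εs)) := by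
      apply div_le_div₀ (by positivity : (0:ℝ) ≤ N * (ε + e + εs + εs * e))
        (mul_le_mul_of_nonneg_right hIN hM0.le) (mul_pos hamin0 hc)
        (mul_le_mul_of_nonneg_right haa hc.le)
    have hcomb : (ε + εs) / (amin - εs) + N * (ε + e + εs + εs * e) / (amin * (amin - εs))
        < amin := by
      have heq : (ε + εs) / (amin - εs) + N * (ε + e + εs + εs * e) / (amin * (amin - εs))
          = (amin * (ε + εs) + N * (ε + e + εs + εs * e)) / (amin * (amin - εs)) := by
        field_simp
      rw [heq, div_lt_iff₀ (mul_pos hamin0 hc)]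
      have h := hG e he0 hεe heb2
      nlinarith [h, sq_nonneg amin]
    calc (ε + εs) / (amin - εs) +
        (((m + 2 : ℕ) : ℝ) - 1) * (ε + e + εs + εs * e) / (a * (amin - εs))
        ≤ (ε + εs) / (amin - εs) + N * (ε + e + εs + εs * e) / (amin * (amin - εs)) := by
          linarith [hstep]
      _ < amin := hcomb
  · -- part (3)
    intro i hi2 hin a haa ha1
    obtain ⟨m, rfl⟩ : ∃ m, i = m + 2 := ⟨i - 2, by omega⟩
    have hie : εseq (m + 2 - 1) = ε * (2 / (ta * εs)) ^ m := by
      rw [show m + 2 - 1 = m + 1 from rfl, hεseq, Nat.add_sub_cancel]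
    set e : ℝ := εseq (m + 2 - 1) with hedef
    have he0 : 0 < e := by rw [hie]; positivity
    have hεe : ε ≤ e := by
      rw [hie]
      have h1 := pow_le_pow_right₀ hr1 (Nat.zero_le m)
      rw [pow_zero] at h1
      exact le_mul_of_one_le_right hε0.le h1
    have hseqi : εseq (m + 2) = e * (2 / (ta * εs)) := by
      rw [hie, hεseq, show m + 2 - 1 = m + 1 from rfl, pow_succ]; ring
    have ha0 : 0 < a := lt_of_lt_of_le hamin0 haa
    have hIN : ((m + 2 : ℕ) : ℝ) - 1 ≤ N := by
      have : ((m + 2 : ℕ) : ℝ) ≤ (n : ℝ) := by exact_mod_cast hin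
      simp only [hN]; push_cast at *; linarith
    have hI1 : (1:ℝ) ≤ ((m + 2 : ℕ) : ℝ) - 1 := by push_cast; linarith
    rw [hseqi]
    have c1 : e / a ≤ e / amin := div_le_div₀ he0.le le_rfl hamin0 haa
    have c2 : (((m + 2 : ℕ) : ℝ) - 1) * (ε + e) / a ≤ N * (2 * e) / amin := by
      apply div_le_div₀ (by positivity) ?_ hamin0 haa
      have h1 : ε + e ≤ 2 * e := by linarith
      have h2 : (0:ℝ) ≤ ε + e := by linarith [hε0]
      exact mul_le_mul hIN h1 h2 hN0.le
    have c3 : 1 / (amin * a * εs) ≤ 1 / (amin * amin * εs) := by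
      apply one_div_le_one_div_of_le (by positivity)
      have h1 : amin * amin ≤ amin * a := mul_le_mul_of_nonneg_left haa hamin0.le
      exact mul_le_mul_of_nonneg_right h1 hεs0.le
    have cinner : 0 ≤ ε + (((m + 2 : ℕ) : ℝ) - 1) * (ε + e) / a := by
      have : 0 ≤ (((m + 2 : ℕ) : ℝ) - 1) * (ε + e) / a :=
        div_nonneg (mul_nonneg (by linarith) (by linarith)) ha0.le
      linarith
    have c4 : (1 / (amin * a * εs)) * (ε + (((m + 2 : ℕ) : ℝ) - 1) * (ε + e) / a)
        ≤ (1 / (amin * amin * εs)) * (e + N * (2 * e) / amin) := by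
      apply mul_le_mul c3 (by linarith [c2]) cinner (by positivity)
    have hamε : amin * εs ≤ 1 := by
      have h1 := mul_lt_mul_of_pos_left hεs1 hamin0
      rw [mul_one] at h1
      linarith
    have final : e / amin + (1 / (amin * amin * εs)) * (e + N * (2 * e) / amin)
        ≤ e * (2 / (ta * εs)) := by
      have heq2 : e / amin + (1 / (amin * amin * εs)) * (e + N * (2 * e) / amin)
          = (e * amin ^ 2 * εs + e * amin + 2 * N * e) / (amin ^ 3 * εs) := by
        field_simp
        ring
      have heq3 : e * (2 / (ta * εs)) = 2 * e / (ta * εs) := by ring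
      rw [heq2, heq3, div_le_div_iff₀ (by positivity) hts0]
      have h3A : 2 * e * εs * (ta * (amin + N)) = 2 * e * εs * amin ^ 3 := by rw [htaN]
      have h3B : 0 ≤ e * εs * ta * amin * (1 - amin * εs) :=
        mul_nonneg (by positivity) (by linarith)
      linarith [h3A, h3B]
    linarith [c1, c4, final]
end

section
/- Let A (|U|×|X|) and B (|Y|×|U|) be column-stochastic matrices with A having no zero rows. Call the pair (A,B) manipulable if there exists a nonzero |U|×|U| matrix Υ whose j-th column (for each j) is balanced (entries sum to 0) and (0,0)-polarized at j (j-th entry ≥ 0, other entries ≤ 0), such that BΥA = 0. If (A,B) is non-manipulable, then the left null space of A contains no L1-normalized vector ω that is (a_min, 0)-double polarized at any pair (α,β), i.e., with ω_α ≥ a_min, ω_β ≤ -a_min, and ω_i = 0 for i ≠ α,β. -/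
open Finset

/-- The observation channel `(A, B)` is manipulable if there is a nonzero
`|U| × |U|` matrix `Υ`, each of whose columns is balanced and `(0,0)`-polarized
at its own index, with `B Υ A = 0`. -/
def Manipulable {U X Y : ℕ} (A : Matrix (Fin U) (Fin X) ℝ)
    (B : Matrix (Fin Y) (Fin U) ℝ) : Prop :=
  ∃ Υ : Matrix (Fin U) (Fin U) ℝ, Υ ≠ 0 ∧
    (∀ j, ∑ i, Υ i j = 0) ∧ (∀ j, 0 ≤ Υ j j) ∧
    (∀ i j, i ≠ j → Υ i j ≤ 0) ∧ B * Υ * A = 0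

theorem stmt_7 {U X Y : ℕ} [NeZero U] [NeZero X] [NeZero Y]
    (A : Matrix (Fin U) (Fin X) ℝ) (B : Matrix (Fin Y) (Fin U) ℝ)
    (hA0 : ∀ i j, 0 ≤ A i j) (hAcol : ∀ j, ∑ i, A i j = 1)
    (hArow : ∀ i, ∃ j, A i j ≠ 0)
    (hB0 : ∀ i j, 0 ≤ B i j) (hBcol : ∀ j, ∑ i, B i j = 1)
    (hnm : ¬ Manipulable A B) :
    ¬ ∃ (ω : Fin U → ℝ) (α β : Fin U), α ≠ β ∧
      (∑ i, |ω i| = 1) ∧ (∀ l, ∑ i, ω i * A i l = 0) ∧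
      amin A ≤ ω α ∧ ω β ≤ -(amin A) ∧ ∀ i, i ≠ α → i ≠ β → ω i = 0 := by
  rintro ⟨ω, α, β, hαβ, _hnorm, hnull, hωα, hωβ, hsupp⟩
  -- amin A > 0
  have hAmin : 0 < Amin A := by
    rw [Amin, Finset.lt_inf'_iff]
    intro i _
    obtain ⟨j, hj⟩ := hArow i
    exact Finset.sum_pos' (fun k _ => hA0 i k)
      ⟨j, Finset.mem_univ j, lt_of_le_of_ne (hA0 i j) (Ne.symm hj)⟩
  have hamin : 0 < amin A := by
    have hU : (0:ℝ) < U := by exact_mod_cast Nat.pos_of_ne_zero (NeZero.ne U)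
    have hX : (0:ℝ) < X := by exact_mod_cast Nat.pos_of_ne_zero (NeZero.ne X)
    exact div_pos hAmin (by positivity)
  have hωαpos : 0 < ω α := lt_of_lt_of_le hamin hωα
  have hωβneg : ω β < 0 := lt_of_le_of_lt hωβ (by linarith)
  set c : Fin U → ℝ := fun i => (if i = α then (1:ℝ) else 0) - (if i = β then 1 else 0)
    with hc
  apply hnm
  refine ⟨Matrix.of fun i j => c i * ω j, ?_, ?_, ?_, ?_, ?_⟩
  · intro h
    have h0 : c α * ω α = 0 := congrFun (congrFun h α) α
    have hcα : c α = 1 := by simp [hc, hαβ]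
    rw [hcα, one_mul] at h0
    exact absurd h0 (ne_of_gt hωαpos)
  · intro j
    simp only [Matrix.of_apply]
    rw [← Finset.sum_mul]
    have : ∑ i, c i = 0 := by
      simp [hc, Finset.sum_sub_distrib]
    rw [this, zero_mul]
  · intro j
    show 0 ≤ c j * ω j
    by_cases hjα : j = α
    · subst hjα
      have : c j = 1 := by simp [hc, hαβ]
      rw [this, one_mul]; exact le_of_lt hωαpos
    · by_cases hjβ : j = β
      · subst hjβ
        have : c j = -1 := by simp [hc, hjα]
        rw [this]; nlinarith
      · have : ω j = 0 := hsupp j hjα hjβ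
        rw [this, mul_zero]
  · intro i j hij
    show c i * ω j ≤ 0
    by_cases hjα : j = α
    · subst hjα
      have : c i = -(if i = β then 1 else 0) := by simp [hc, hij]
      rw [this]
      by_cases hiβ : i = β <;> simp [hiβ] <;> linarith
    · by_cases hjβ : j = β
      · subst hjβ
        have : c i = (if i = α then 1 else 0) := by simp [hc, hij]
        rw [this]
        by_cases hiα : i = α <;> simp [hiα] <;> linarith
      · have : ω j = 0 := hsupp j hjα hjβ
        rw [this, mul_zero]
  · have hYA : (Matrix.of fun i j => c i * ω j) * A = 0 := by
      ext i l
      simp only [Matrix.mul_apply, Matrix.zero_apply, Matrix.of_apply]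
      have : ∑ k, c i * ω k * A k l = c i * ∑ k, ω k * A k l := by
        rw [Finset.mul_sum]; congr 1; ext k; ring
      rw [this, hnull l, mul_zero]
    rw [Matrix.mul_assoc, hYA, Matrix.mul_zero]
end

section
/- Let A (|U|×|X|) and B (|Y|×|U|) be column-stochastic matrices, A with no zero rows. If the pair (A,B) is non-manipulable, then there exist constants ε_s > 0 (satisfying the explicit upper bound involving a_min and ã_n for 1 ≤ n ≤ |U|-1) and ε_A with a_min² ε_s/((a_min-ε_s) ã_{|U|-1}) < ε_A < a_min, such that the left null space of A does not contain any L1-normalized (a_min, ε_A)-double polarized vector. -/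
open Finset

/-- The constant `ã_n = a_min² (1 + n/a_min)⁻¹`. -/
noncomputable def atil {U X : ℕ} [NeZero U] (A : Matrix (Fin U) (Fin X) ℝ) (n : ℕ) : ℝ :=
  amin A ^ 2 * (1 + (n : ℝ) / amin A)⁻¹

/-- The set of `(a, ε)`-double-polarized (at `(j,k)`) L1-normalized vectors in the
left null space of `A`. -/
def Tset {U X : ℕ} (A : Matrix (Fin U) (Fin X) ℝ) (a ε : ℝ) (j k : Fin U) :
    Set (Fin U → ℝ) :=
  {ω | (∑ i, |ω i| = 1) ∧ (∀ l, ∑ i, ω i * A i l = 0) ∧ a ≤ ω j ∧ ω k ≤ -a ∧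
    ∀ i, i ≠ j → i ≠ k → |ω i| ≤ ε}

lemma Tmono {U X : ℕ} (A : Matrix (Fin U) (Fin X) ℝ) (a : ℝ) {ε ε' : ℝ} (h : ε ≤ ε')
    (j k : Fin U) : Tset A a ε j k ⊆ Tset A a ε' j k := by
  rintro ω ⟨h1, h2, h3, h4, h5⟩
  exact ⟨h1, h2, h3, h4, fun i hi hk => (h5 i hi hk).trans h⟩

lemma Tclosed {U X : ℕ} (A : Matrix (Fin U) (Fin X) ℝ) (a ε : ℝ) (j k : Fin U) :
    IsClosed (Tset A a ε j k) := by
  have hrw : Tset A a ε j k =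
      ((fun ω : Fin U → ℝ => ∑ i, |ω i|) ⁻¹' {1}) ∩
      ((⋂ l, (fun ω : Fin U → ℝ => ∑ i, ω i * A i l) ⁻¹' {0})) ∩
      ((fun ω : Fin U → ℝ => ω j) ⁻¹' Set.Ici a) ∩
      ((fun ω : Fin U → ℝ => ω k) ⁻¹' Set.Iic (-a)) ∩
      (⋂ i, ⋂ (_ : i ≠ j), ⋂ (_ : i ≠ k), (fun ω : Fin U → ℝ => |ω i|) ⁻¹' Set.Iic ε) := by
    ext ω
    simp only [Tset, Set.mem_setOf_eq, Set.mem_inter_iff, Set.mem_preimage,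
      Set.mem_singleton_iff, Set.mem_iInter, Set.mem_Ici, Set.mem_Iic]
    tauto
  rw [hrw]
  have hc1 : Continuous fun ω : Fin U → ℝ => ∑ i, |ω i| :=
    continuous_finset_sum _ fun i _ => (continuous_apply i).abs
  refine ((((IsClosed.inter ?_ ?_).inter ?_).inter ?_).inter ?_)
  · exact isClosed_singleton.preimage hc1
  · refine isClosed_iInter fun l => ?_
    exact isClosed_singleton.preimage
      (continuous_finset_sum _ fun i _ => (continuous_apply i).mul continuous_const)
  · exact isClosed_Ici.preimage (continuous_apply j)
  · exact isClosed_Iic.preimage (continuous_apply k)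
  · exact isClosed_iInter fun i => isClosed_iInter fun _ => isClosed_iInter fun _ =>
      isClosed_Iic.preimage ((continuous_apply i).abs)

lemma Tcompact {U X : ℕ} (A : Matrix (Fin U) (Fin X) ℝ) (a ε : ℝ) (j k : Fin U) :
    IsCompact (Tset A a ε j k) := by
  refine IsCompact.of_isClosed_subset (isCompact_closedBall (0 : Fin U → ℝ) 1)
    (Tclosed A a ε j k) ?_
  rintro ω ⟨h1, -, -, -, -⟩
  rw [Metric.mem_closedBall, dist_zero_right]
  rw [pi_norm_le_iff_of_nonneg zero_le_one]
  intro i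
  rw [Real.norm_eq_abs]
  calc |ω i| ≤ ∑ i', |ω i'| :=
        Finset.single_le_sum (fun i' _ => abs_nonneg (ω i')) (Finset.mem_univ i)
    _ = 1 := h1

lemma key {U X : ℕ} (A : Matrix (Fin U) (Fin X) ℝ) (a : ℝ)
    (hcl : ∀ j k : Fin U, j ≠ k → Tset A a 0 j k = ∅) :
    ∃ ε : ℝ, 0 < ε ∧ ∀ j k : Fin U, j ≠ k → Tset A a ε j k = ∅ := by
  by_contra h
  push_neg at h
  have h' : ∀ n : ℕ, ∃ jk : Fin U × Fin U, jk.1 ≠ jk.2 ∧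
      (Tset A a (1 / (n + 1)) jk.1 jk.2).Nonempty := by
    intro n
    obtain ⟨j, k, hjk, hne⟩ := h (1 / (n + 1)) (by positivity)
    exact ⟨(j, k), hjk, hne⟩
  choose p hp hne using h'
  obtain ⟨⟨j, k⟩, hfib⟩ := Finite.exists_infinite_fiber p
  have hinf : {n | p n = (j, k)}.Infinite := Set.infinite_coe_iff.mp hfib
  have hjk : j ≠ k := by
    obtain ⟨m, hm, -⟩ := hinf.exists_gt 0
    have := hp m; rw [hm] at this; exact this
  have hne' : ∀ n : ℕ, (Tset A a (1 / ((n : ℝ) + 1)) j k).Nonempty := by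
    intro n
    obtain ⟨m, hm, hlt⟩ := hinf.exists_gt n
    have h1 := hne m
    rw [hm] at h1
    obtain ⟨ω, hω⟩ := h1
    refine ⟨ω, Tmono A a ?_ j k hω⟩
    have hle : ((n : ℝ) + 1) ≤ (m : ℝ) + 1 := by
      have : (n : ℝ) ≤ m := by exact_mod_cast hlt.le
      linarith
    exact one_div_le_one_div_of_le (by positivity) hle
  obtain ⟨ω, hω⟩ := IsCompact.nonempty_iInter_of_sequence_nonempty_isCompact_isClosed
    (fun n => Tset A a (1 / ((n : ℝ) + 1)) j k)
    (fun n => Tmono A a (by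
      apply one_div_le_one_div_of_le (by positivity)
      push_cast; linarith) j k)
    hne' (Tcompact A a _ j k) (fun n => Tclosed A a _ j k)
  rw [Set.mem_iInter] at hω
  have hmem : ω ∈ Tset A a 0 j k := by
    obtain ⟨h1, h2, h3, h4, -⟩ := hω 0
    refine ⟨h1, h2, h3, h4, fun i hi hk => ?_⟩
    by_contra habs
    push_neg at habs
    obtain ⟨n, hn⟩ := exists_nat_one_div_lt habs
    exact absurd ((hω n).2.2.2.2 i hi hk) (not_le.mpr (by exact_mod_cast hn))
  rw [hcl j k hjk] at hmem
  exact hmem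

theorem stmt_8 {U X Y : ℕ} [NeZero U] [NeZero X] [NeZero Y]
    (A : Matrix (Fin U) (Fin X) ℝ) (B : Matrix (Fin Y) (Fin U) ℝ)
    (hA0 : ∀ i j, 0 ≤ A i j) (hAcol : ∀ j, ∑ i, A i j = 1)
    (hArow : ∀ i, ∃ j, A i j ≠ 0)
    (hB0 : ∀ i j, 0 ≤ B i j) (hBcol : ∀ j, ∑ i, B i j = 1)
    (hnm : ¬ Manipulable A B) :
    ∃ εs εA : ℝ, 0 < εs ∧
      (∀ n : ℕ, 1 ≤ n → n ≤ U - 1 → εs < amin A ^ 2 * atil A n *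
        (amin A ^ 2 * (1 + (amin A * atil A n / 2) ^ n) +
          (n : ℝ) * (1 + amin A) * atil A n ^ 2 / 2 + amin A * atil A n)⁻¹) ∧
      amin A ^ 2 * εs / ((amin A - εs) * atil A (U - 1)) < εA ∧ εA < amin A ∧
      ¬ ∃ (ω : Fin U → ℝ) (j k : Fin U), j ≠ k ∧
        (∑ i, |ω i| = 1) ∧ (∀ l, ∑ i, ω i * A i l = 0) ∧
        amin A ≤ ω j ∧ ω k ≤ -(amin A) ∧ ∀ i, i ≠ j → i ≠ k → |ω i| ≤ εA := by
  set a := amin A with ha_def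
  -- positivity of `a`
  have hAmin : 0 < Amin A := by
    rw [Amin, Finset.lt_inf'_iff]
    intro i _
    obtain ⟨j, hj⟩ := hArow i
    exact Finset.sum_pos' (fun j' _ => hA0 i j') ⟨j, Finset.mem_univ j, (hA0 i j).lt_of_ne (Ne.symm hj)⟩
  have hU : (0 : ℝ) < U := by exact_mod_cast Nat.pos_of_ne_zero (NeZero.ne U)
  have hX : (0 : ℝ) < X := by exact_mod_cast Nat.pos_of_ne_zero (NeZero.ne X)
  have ha : 0 < a := by
    rw [ha_def, amin]
    positivity
  have hatil : ∀ n : ℕ, 0 < atil A n := by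
    intro n
    have h1 : 0 < 1 + (n : ℝ) / amin A := by
      have := div_nonneg (Nat.cast_nonneg n) ha.le
      linarith
    exact mul_pos (pow_pos ha 2) (inv_pos.mpr h1)
  -- the `ε = 0` case: a double-polarized vector with zeros elsewhere gives manipulability
  have hcl : ∀ j k : Fin U, j ≠ k → Tset A a 0 j k = ∅ := by
    intro j k hjk
    rw [Set.eq_empty_iff_forall_notMem]
    rintro ω ⟨h1, h2, h3, h4, h5⟩
    have h5' : ∀ i, i ≠ j → i ≠ k → ω i = 0 := fun i hi hk => abs_nonpos_iff.mp (h5 i hi hk)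
    apply hnm
    set c : Fin U → ℝ := fun i => (if i = j then (1 : ℝ) else 0) - (if i = k then 1 else 0)
      with hc_def
    have hcj : c j = 1 := by simp [hc_def, hjk]
    have hck : c k = -1 := by simp [hc_def, hjk.symm]
    have hci : ∀ i, i ≠ j → i ≠ k → c i = 0 := by intro i hi hk; simp [hc_def, hi, hk]
    have hωj : 0 < ω j := lt_of_lt_of_le ha h3
    have hωk : ω k < 0 := lt_of_le_of_lt h4 (by linarith)
    refine ⟨Matrix.of fun i m => c i * ω m, ?_, ?_, ?_, ?_, ?_⟩
    · intro h0
      have := congrFun (congrFun h0 j) j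
      simp only [Matrix.of_apply, Matrix.zero_apply, hcj, one_mul] at this
      exact hωj.ne' this
    · intro m
      have : ∑ i, c i * ω m = (∑ i, c i) * ω m := (Finset.sum_mul _ _ _).symm
      simp only [Matrix.of_apply]
      rw [this]
      have hsum : ∑ i, c i = 0 := by
        simp [hc_def, Finset.sum_sub_distrib]
      rw [hsum, zero_mul]
    · intro m
      simp only [Matrix.of_apply]
      rcases eq_or_ne m j with rfl | hmj
      · rw [hcj, one_mul]; exact hωj.le
      rcases eq_or_ne m k with rfl | hmk
      · rw [hck]; nlinarith
      · rw [hci m hmj hmk, zero_mul]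
    · intro i m him
      simp only [Matrix.of_apply]
      rcases eq_or_ne i j with rfl | hij
      · rw [hcj, one_mul]
        rcases eq_or_ne m k with rfl | hmk
        · exact hωk.le
        · rw [h5' m (Ne.symm him) hmk]
      rcases eq_or_ne i k with rfl | hik
      · rw [hck]
        rcases eq_or_ne m j with rfl | hmj
        · nlinarith
        · rw [h5' m hmj (Ne.symm him), neg_one_mul, neg_zero]
      · rw [hci i hij hik, zero_mul]
    · have hUA : (Matrix.of fun i m => c i * ω m) * A = 0 := by
        ext i l
        rw [Matrix.mul_apply]
        simp only [Matrix.of_apply, Matrix.zero_apply]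
        calc ∑ m, c i * ω m * A m l = c i * ∑ m, ω m * A m l := by
              rw [Finset.mul_sum]; congr 1; ext m; ring
          _ = 0 := by rw [h2 l, mul_zero]
      rw [Matrix.mul_assoc, hUA, Matrix.mul_zero]
  -- get a uniform ε0 from the compactness lemma
  obtain ⟨ε0, hε0, hempty⟩ := key A a hcl
  set εA := min ε0 (a / 2) with hεA_def
  have hεApos : 0 < εA := lt_min hε0 (by linarith)
  have hεAlt : εA < a := lt_of_le_of_lt (min_le_right _ _) (by linarith)
  set t := atil A (U - 1) with ht_def
  have ht : 0 < t := hatil (U - 1)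
  -- the finite family of upper-bound constraints
  set f : ℕ → ℝ := fun n => amin A ^ 2 * atil A n *
    (amin A ^ 2 * (1 + (amin A * atil A n / 2) ^ n) +
      (n : ℝ) * (1 + amin A) * atil A n ^ 2 / 2 + amin A * atil A n)⁻¹ with hf_def
  have hfpos : ∀ n, 0 < f n := by
    intro n
    have h1 := hatil n
    have h2 : (0:ℝ) ≤ (n : ℝ) := Nat.cast_nonneg n
    rw [hf_def]
    have hp : (0:ℝ) < amin A * atil A n := mul_pos ha h1
    have hpow : (0:ℝ) < (amin A * atil A n / 2) ^ n := pow_pos (by linarith) n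
    refine mul_pos (mul_pos (pow_pos ha 2) h1) (inv_pos.mpr ?_)
    have : (0:ℝ) ≤ (n : ℝ) * (1 + amin A) * atil A n ^ 2 / 2 := by positivity
    nlinarith [pow_pos ha 2]
  set G : ℝ := if h : (Finset.Icc 1 (U - 1)).Nonempty
    then ((Finset.Icc 1 (U - 1)).inf' h f) / 2 else 1 with hG_def
  have hGpos : 0 < G := by
    rw [hG_def]
    split
    · rename_i h
      have : 0 < (Finset.Icc 1 (U - 1)).inf' h f := by
        rw [Finset.lt_inf'_iff]
        exact fun n _ => hfpos n
      linarith
    · exact one_pos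
  set εs := min (min (a / 2) (εA * t / (4 * a))) G with hεs_def
  have hεspos : 0 < εs := by
    refine lt_min (lt_min (by linarith) ?_) hGpos
    positivity
  have hεs1 : εs ≤ a / 2 := (min_le_left _ _).trans (min_le_left _ _)
  have hεs2 : εs ≤ εA * t / (4 * a) := (min_le_left _ _).trans (min_le_right _ _)
  refine ⟨εs, εA, hεspos, ?_, ?_, hεAlt, ?_⟩
  · -- upper bound constraints
    intro n hn1 hn2
    have hmem : n ∈ Finset.Icc 1 (U - 1) := Finset.mem_Icc.mpr ⟨hn1, hn2⟩
    have hne : (Finset.Icc 1 (U - 1)).Nonempty := ⟨n, hmem⟩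
    have hG : G = ((Finset.Icc 1 (U - 1)).inf' hne f) / 2 := by
      rw [hG_def, dif_pos hne]
    have h1 : εs ≤ G := min_le_right _ _
    have h2 : (Finset.Icc 1 (U - 1)).inf' hne f ≤ f n := Finset.inf'_le f hmem
    have h3 := hfpos n
    calc εs ≤ G := h1
      _ = ((Finset.Icc 1 (U - 1)).inf' hne f) / 2 := hG
      _ ≤ f n / 2 := by linarith
      _ < f n := by linarith
  · -- the lower bound on εA
    have hden : 0 < (a - εs) * t := mul_pos (by linarith) ht
    rw [div_lt_iff₀ hden]
    have hnum : a ^ 2 * εs ≤ a ^ 2 * (εA * t / (4 * a)) :=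
      mul_le_mul_of_nonneg_left hεs2 (by positivity)
    have heq : a ^ 2 * (εA * t / (4 * a)) = a * εA * t / 4 := by
      field_simp
    have h4 : εA * ((a - εs) * t) ≥ εA * ((a / 2) * t) := by
      apply mul_le_mul_of_nonneg_left _ hεApos.le
      apply mul_le_mul_of_nonneg_right _ ht.le
      linarith
    nlinarith [mul_pos (mul_pos hεApos ht) ha]
  · -- no double-polarized vector in the left null space
    rintro ⟨ω, j, k, hjk, h1, h2, h3, h4, h5⟩
    have hmem : ω ∈ Tset A a εA j k := ⟨h1, h2, h3, h4, h5⟩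
    have hsub : Tset A a εA j k ⊆ Tset A a ε0 j k :=
      Tmono A a (min_le_left _ _) j k
    rw [hempty j k hjk] at hsub
    exact hsub hmem
end

section
/- Let A (|U|×|X|) and B (|Y|×|U|) be column-stochastic matrices with A having no zero rows, and suppose the right null space of B is trivial (Bω^T = 0 implies ω = 0). Then (A,B) is non-manipulable if and only if the left null space of A contains no L1-normalized (a_min, 0)-double polarized vector. -/
open Finset

/-!
Because `B` has trivial kernel, a manipulation is a nonzero `Υ` with balanced, polarized columns
and `Υ * A = 0`, so each row of `Υ` lies in the left null space of `A`. Normalise the rows of `A`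
to `u c = A c / R c`, with `R c` the row sums, and among the indices with `0 < Υ c c` pick `j`
with `‖u j‖` maximal. Row `j` of `Υ * A = 0` writes `u j` as a convex combination of the `u c`
with `Υ j c < 0`; such columns are nonzero, so these `c` have `0 < Υ c c` too, and strict
convexity of the Euclidean norm forces `u k = u j` for one of them. Two proportional rows
`j ≠ k` give the left null vector `(R k • e j - R j • e k) / (R j + R k)`, whose two entries
are at least `a_min` in absolute value because `A_min ≤ R ≤ |X|`. Conversely, a double-polarized
`ω` in the left null space yields the manipulation `Υ = (e j - e k) ωᵀ`.
-/

open Matrix RealInnerProductSpace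

theorem eq_of_sum_smul_sub_eq_zero_of_norm_le {ι E : Type*} [Fintype ι] [NormedAddCommGroup E]
    [InnerProductSpace ℝ E] {w : ι → ℝ} {v : ι → E} {j : ι} (hw : ∀ c, c ≠ j → 0 ≤ w c)
    (hv : ∀ c, w c ≠ 0 → ‖v c‖ ≤ ‖v j‖) (hsum : ∑ c, w c • (v c - v j) = 0)
    {c : ι} (hc : w c ≠ 0) : v c = v j := by
  have hterm : ∀ c, w c * ‖v c - v j‖ ^ 2 ≤ -(2 * (w c * ⟪v c - v j, v j⟫)) := by
    intro c
    by_cases hwc : w c = 0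
    · simp [hwc]
    by_cases hcj : c = j
    · simp [hcj]
    have hsq : ‖v c‖ ^ 2 ≤ ‖v j‖ ^ 2 := pow_le_pow_left₀ (norm_nonneg _) (hv c hwc) 2
    have hpol : ‖v c - v j‖ ^ 2 + 2 * ⟪v c - v j, v j⟫ = ‖v c‖ ^ 2 - ‖v j‖ ^ 2 := by
      rw [norm_sub_sq_real, inner_sub_left, real_inner_self_eq_norm_sq]; ring
    have : w c * (‖v c - v j‖ ^ 2 + 2 * ⟪v c - v j, v j⟫) ≤ 0 := by
      rw [hpol]; exact mul_nonpos_of_nonneg_of_nonpos (hw c hcj) (sub_nonpos.2 hsq)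
    linarith
  have hnonneg : ∀ c, 0 ≤ w c * ‖v c - v j‖ ^ 2 := by
    intro c
    by_cases hcj : c = j
    · simp [hcj]
    · exact mul_nonneg (hw c hcj) (sq_nonneg _)
  have hinner : ∑ c, w c * ⟪v c - v j, v j⟫ = 0 := by
    simpa [sum_inner, real_inner_smul_left] using congrArg (⟪·, v j⟫) hsum
  have hzero : ∑ c, w c * ‖v c - v j‖ ^ 2 = 0 := by
    refine le_antisymm ?_ (sum_nonneg fun c _ => hnonneg c)
    calc ∑ c, w c * ‖v c - v j‖ ^ 2 ≤ ∑ c, -(2 * (w c * ⟪v c - v j, v j⟫)) :=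
          sum_le_sum fun c _ => hterm c
      _ = 0 := by rw [sum_neg_distrib, ← mul_sum, hinner]; simp
  have := (sum_eq_zero_iff_of_nonneg fun c _ => hnonneg c).mp hzero c (mem_univ c)
  simpa [hc, sub_eq_zero] using this

namespace Matrix

theorem eq_zero_of_mul_eq_zero_of_ker_trivial {m n p : Type*} [Fintype n]
    {B : Matrix m n ℝ} (hB : ∀ ω : n → ℝ, B *ᵥ ω = 0 → ω = 0) {M : Matrix n p ℝ}
    (h : B * M = 0) : M = 0 := by
  ext i l
  refine congrFun (hB (fun i => M i l) ?_) i
  ext y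
  simpa [mulVec, dotProduct, mul_apply] using congrFun (congrFun h y) l

theorem diag_pos_of_apply_ne_zero {n : Type*} [Fintype n] {Υ : Matrix n n ℝ}
    (hbal : ∀ j, ∑ i, Υ i j = 0) (hoff : ∀ i j, i ≠ j → Υ i j ≤ 0) {i c : n}
    (h : Υ i c ≠ 0) : 0 < Υ c c := by
  by_contra! hcc
  have hle : ∀ i', Υ i' c ≤ 0 := fun i' => by
    by_cases hi' : i' = c
    · exact hi' ▸ hcc
    · exact hoff i' c hi'
  exact h ((sum_eq_zero_iff_of_nonpos fun i' _ => hle i').mp (hbal c) i (mem_univ i))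

end Matrix

section Rows

variable {m n : Type*} [Fintype n] {A : Matrix m n ℝ}

theorem rowSum_pos (hA0 : ∀ i j, 0 ≤ A i j) (hArow : ∀ i, ∃ j, A i j ≠ 0) (i : m) :
    0 < ∑ j, A i j := by
  obtain ⟨j, hj⟩ := hArow i
  exact sum_pos' (fun l _ => hA0 i l) ⟨j, mem_univ j, (hA0 i j).lt_of_ne' hj⟩

noncomputable def normalizedRow (A : Matrix m n ℝ) (i : m) : EuclideanSpace ℝ n :=
  WithLp.toLp 2 ((∑ l, A i l)⁻¹ • A i)

theorem smul_eq_smul_of_normalizedRow_eq (hR : ∀ i, 0 < ∑ l, A i l) {j k : m}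
    (h : normalizedRow A k = normalizedRow A j) :
    (∑ l, A k l) • A j = (∑ l, A j l) • A k := by
  ext l
  have := congrArg (· l) h
  simp only [normalizedRow, PiLp.toLp_apply, Pi.smul_apply, smul_eq_mul] at this
  rw [inv_mul_eq_div, inv_mul_eq_div, div_eq_div_iff (hR k).ne' (hR j).ne'] at this
  simp only [Pi.smul_apply, smul_eq_mul]
  linarith

variable [Fintype m]

theorem sum_mul_rowSum_eq_zero {Υ : Matrix m m ℝ} (hΥA : Υ * A = 0) (i : m) :
    ∑ c, Υ i c * ∑ l, A c l = 0 := by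
  simp_rw [mul_sum]
  rw [sum_comm]
  exact sum_eq_zero fun l _ => by simpa [mul_apply] using congrFun (congrFun hΥA i) l

theorem sum_smul_normalizedRow_sub_eq_zero (hR : ∀ i, 0 < ∑ l, A i l) {Υ : Matrix m m ℝ}
    (hΥA : Υ * A = 0) (j : m) :
    ∑ c, (Υ j c * ∑ l, A c l) • (normalizedRow A c - normalizedRow A j) = 0 := by
  ext l
  simp only [normalizedRow, WithLp.ofLp_sum, WithLp.ofLp_smul, WithLp.ofLp_sub,
    WithLp.toLp_smul, Finset.sum_apply, Pi.smul_apply, Pi.sub_apply, smul_eq_mul,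
    PiLp.zero_apply]
  calc ∑ c, Υ j c * (∑ l, A c l) * ((∑ l, A c l)⁻¹ * A c l - (∑ l, A j l)⁻¹ * A j l)
      = (Υ * A) j l - (∑ c, Υ j c * ∑ l, A c l) * ((∑ l, A j l)⁻¹ * A j l) := by
        rw [mul_apply, sum_mul, ← sum_sub_distrib]
        refine sum_congr rfl fun c _ => ?_
        rw [mul_sub, mul_assoc (Υ j c), mul_inv_cancel_left₀ (hR c).ne']
    _ = 0 := by rw [hΥA, sum_mul_rowSum_eq_zero hΥA, Matrix.zero_apply, zero_mul, sub_zero]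

theorem exists_rows_proportional (hR : ∀ i, 0 < ∑ l, A i l) {Υ : Matrix m m ℝ} (hΥ : Υ ≠ 0)
    (hbal : ∀ j, ∑ i, Υ i j = 0) (hoff : ∀ i j, i ≠ j → Υ i j ≤ 0) (hΥA : Υ * A = 0) :
    ∃ j k, j ≠ k ∧ (∑ l, A k l) • A j = (∑ l, A j l) • A k := by
  set S := univ.filter fun c => 0 < Υ c c
  have hS : S.Nonempty := by
    obtain ⟨i, c, h⟩ : ∃ i c, Υ i c ≠ 0 := by
      by_contra! h; exact hΥ (ext h)
    exact ⟨c, mem_filter.2 ⟨mem_univ c, diag_pos_of_apply_ne_zero hbal hoff h⟩⟩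
  obtain ⟨j, hjS, hjmax⟩ := S.exists_max_image (‖normalizedRow A ·‖) hS
  obtain ⟨k, hkj, hk⟩ : ∃ k, k ≠ j ∧ Υ j k < 0 := by
    by_contra! h
    have hsum : ∑ c, Υ j c * ∑ l, A c l = Υ j j * ∑ l, A j l := sum_eq_single j
      (fun c _ hc => by rw [le_antisymm (hoff j c (Ne.symm hc)) (h c hc), zero_mul]) (by simp)
    have hjj := (mem_filter.1 hjS).2
    nlinarith [sum_mul_rowSum_eq_zero hΥA j, hR j]
  refine ⟨j, k, hkj.symm, smul_eq_smul_of_normalizedRow_eq hR ?_⟩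
  refine eq_of_sum_smul_sub_eq_zero_of_norm_le (w := fun c => -(Υ j c * ∑ l, A c l))
    (fun c hc => ?_) (fun c hc => ?_) ?_ (neg_ne_zero.2 (mul_ne_zero hk.ne (hR k).ne'))
  · exact neg_nonneg.2 (mul_nonpos_of_nonpos_of_nonneg (hoff j c hc.symm) (hR c).le)
  · simp only [ne_eq, neg_eq_zero, mul_eq_zero, not_or] at hc
    exact hjmax c (mem_filter.2 ⟨mem_univ c, diag_pos_of_apply_ne_zero hbal hoff hc.1⟩)
  · simp only [neg_smul, sum_neg_distrib, sum_smul_normalizedRow_sub_eq_zero hR hΥA, neg_zero]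

end Rows

section Amin

variable {U X : ℕ} {A : Matrix (Fin U) (Fin X) ℝ}

theorem rowSum_le_card (hA0 : ∀ i j, 0 ≤ A i j) (hAcol : ∀ j, ∑ i, A i j = 1) (i : Fin U) :
    ∑ j, A i j ≤ X :=
  calc ∑ j, A i j ≤ ∑ i', ∑ j, A i' j :=
        single_le_sum (fun i' _ => sum_nonneg fun j _ => hA0 i' j) (mem_univ i)
    _ = ∑ j, ∑ i', A i' j := sum_comm
    _ = X := by simp [hAcol]

variable [NeZero U]

theorem Amin_le_rowSum (i : Fin U) : Amin A ≤ ∑ j, A i j :=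
  inf'_le _ (mem_univ i)

theorem Amin_pos_s9 (hA0 : ∀ i j, 0 ≤ A i j) (hArow : ∀ i, ∃ j, A i j ≠ 0) : 0 < Amin A :=
  (lt_inf'_iff _).2 fun i _ => rowSum_pos hA0 hArow i

theorem amin_pos_s9 (hA0 : ∀ i j, 0 ≤ A i j) (hArow : ∀ i, ∃ j, A i j ≠ 0) : 0 < amin A := by
  have := Amin_pos_s9 hA0 hArow
  have : (0 : ℝ) < U := by exact_mod_cast Nat.pos_of_neZero U
  unfold amin
  positivity

theorem amin_le_rowSum_div (hA0 : ∀ i j, 0 ≤ A i j) (hAcol : ∀ j, ∑ i, A i j = 1)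
    (hArow : ∀ i, ∃ j, A i j ≠ 0) (j k : Fin U) :
    amin A ≤ (∑ l, A k l) / (∑ l, A j l + ∑ l, A k l) := by
  have ha := Amin_pos_s9 hA0 hArow
  have hak := Amin_le_rowSum (A := A) k
  have hj := rowSum_pos hA0 hArow j
  have hjX := rowSum_le_card hA0 hAcol j
  have hU : (1 : ℝ) ≤ U := by exact_mod_cast Nat.one_le_iff_ne_zero.2 (NeZero.ne U)
  have hX : (0 : ℝ) ≤ X := Nat.cast_nonneg X
  calc amin A ≤ Amin A / (X + Amin A) :=
        div_le_div_of_nonneg_left ha.le (by linarith) (le_mul_of_one_le_left (by linarith) hU)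
    _ ≤ (∑ l, A k l) / (X + ∑ l, A k l) := by
        rw [div_le_div_iff₀ (by linarith) (by linarith)]
        nlinarith
    _ ≤ (∑ l, A k l) / (∑ l, A j l + ∑ l, A k l) :=
        div_le_div_of_nonneg_left (by linarith) (by linarith) (by linarith)

end Amin

theorem manipulable_of_vecMul_eq_zero {U X Y : ℕ} {A : Matrix (Fin U) (Fin X) ℝ}
    (B : Matrix (Fin Y) (Fin U) ℝ) {ω : Fin U → ℝ} {j k : Fin U} (hjk : j ≠ k)
    (hj : 0 < ω j) (hk : ω k ≤ 0) (hsupp : ∀ i, i ≠ j → i ≠ k → ω i = 0)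
    (hω : ω ᵥ* A = 0) : Manipulable A B := by
  refine ⟨vecMulVec (Pi.single j 1 - Pi.single k 1) ω, ?_, ?_, ?_, ?_, ?_⟩
  · rw [Ne, vecMulVec_eq_zero, not_or]
    refine ⟨fun h => ?_, fun h => hj.ne' (congrFun h j)⟩
    simpa [hjk] using congrFun h j
  · intro c
    simp [vecMulVec_apply, ← sum_mul, sum_sub_distrib]
  · intro c
    by_cases hcj : c = j
    · subst hcj; simp [vecMulVec_apply, hjk, hj.le]
    by_cases hck : c = k
    · subst hck; simp [vecMulVec_apply, Ne.symm hjk, hk]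
    · simp [vecMulVec_apply, hsupp c hcj hck]
  · intro i c hic
    by_cases hcj : c = j
    · subst hcj
      by_cases hik : i = k <;> simp [vecMulVec_apply, hic, hik, hjk.symm, hj.le]
    by_cases hck : c = k
    · subst hck
      by_cases hij : i = j <;> simp [vecMulVec_apply, hic, hij, hjk, hk]
    · simp [vecMulVec_apply, hsupp c hcj hck]
  · rw [Matrix.mul_assoc, vecMulVec_mul, hω]
    ext
    simp [mul_apply, vecMulVec_apply]

theorem exists_doublePolarized_of_rows_proportional {U X : ℕ} [NeZero U]
    {A : Matrix (Fin U) (Fin X) ℝ} (hA0 : ∀ i j, 0 ≤ A i j) (hAcol : ∀ j, ∑ i, A i j = 1)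
    (hArow : ∀ i, ∃ j, A i j ≠ 0) {j k : Fin U} (hjk : j ≠ k)
    (hprop : (∑ l, A k l) • A j = (∑ l, A j l) • A k) :
    ∃ (ω : Fin U → ℝ) (j k : Fin U), j ≠ k ∧
        (∑ i, |ω i| = 1) ∧ (∀ l, ∑ i, ω i * A i l = 0) ∧
        amin A ≤ ω j ∧ ω k ≤ -(amin A) ∧ ∀ i, i ≠ j → i ≠ k → ω i = 0 := by
  have hj := rowSum_pos hA0 hArow j
  have hk := rowSum_pos hA0 hArow k
  set N := ∑ l, A j l + ∑ l, A k l
  have hN : 0 < N := add_pos hj hk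
  refine ⟨Pi.single j ((∑ l, A k l) / N) - Pi.single k ((∑ l, A j l) / N), j, k, hjk,
    ?_, fun l => ?_, ?_, ?_, fun i hij hik => by simp [hij, hik]⟩
  · rw [Fintype.sum_eq_add j k hjk (fun i hi => by simp [hi.1, hi.2])]
    simp only [Pi.sub_apply, Pi.single_eq_same, Pi.single_eq_of_ne hjk, Pi.single_eq_of_ne hjk.symm,
      sub_zero, zero_sub, abs_neg]
    rw [abs_of_pos (div_pos hk hN), abs_of_pos (div_pos hj hN), ← add_div, add_comm,
      div_self hN.ne']
  · rw [Fintype.sum_eq_add j k hjk (fun i hi => by simp [hi.1, hi.2])]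
    have := congrFun hprop l
    simp only [Pi.smul_apply, smul_eq_mul] at this
    simp only [Pi.sub_apply, Pi.single_eq_same, Pi.single_eq_of_ne hjk, Pi.single_eq_of_ne hjk.symm,
      sub_zero, zero_sub, neg_mul]
    rw [div_mul_eq_mul_div, div_mul_eq_mul_div, this]
    ring
  · simpa [hjk] using amin_le_rowSum_div hA0 hAcol hArow j k
  · have := amin_le_rowSum_div hA0 hAcol hArow k j
    simp only [Pi.sub_apply, Pi.single_eq_same, Pi.single_eq_of_ne hjk.symm, zero_sub,
      neg_le_neg_iff]
    rwa [add_comm] at this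

theorem stmt_9_general {U X Y : ℕ} [NeZero U]
    (A : Matrix (Fin U) (Fin X) ℝ) (B : Matrix (Fin Y) (Fin U) ℝ)
    (hA0 : ∀ i j, 0 ≤ A i j) (hAcol : ∀ j, ∑ i, A i j = 1)
    (hArow : ∀ i, ∃ j, A i j ≠ 0)
    (hBtriv : ∀ ω : Fin U → ℝ, (∀ i, ∑ j, B i j * ω j = 0) → ω = 0) :
    ¬ Manipulable A B ↔
      ¬ ∃ (ω : Fin U → ℝ) (j k : Fin U), j ≠ k ∧
        (∑ i, |ω i| = 1) ∧ (∀ l, ∑ i, ω i * A i l = 0) ∧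
        amin A ≤ ω j ∧ ω k ≤ -(amin A) ∧ ∀ i, i ≠ j → i ≠ k → ω i = 0 := by
  refine not_congr ⟨fun ⟨Υ, hΥ, hbal, _, hoff, hBΥA⟩ => ?_,
    fun ⟨ω, j, k, hjk, _, hω, hj, hk, hsupp⟩ => ?_⟩
  · have hΥA : Υ * A = 0 := eq_zero_of_mul_eq_zero_of_ker_trivial
      (fun ω hω => hBtriv ω fun i => congrFun hω i) (by rwa [Matrix.mul_assoc] at hBΥA)
    obtain ⟨j, k, hjk, hprop⟩ :=
      exists_rows_proportional (rowSum_pos hA0 hArow) hΥ hbal hoff hΥA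
    exact exists_doublePolarized_of_rows_proportional hA0 hAcol hArow hjk hprop
  · have hamin := amin_pos_s9 hA0 hArow
    exact manipulable_of_vecMul_eq_zero B hjk (hamin.trans_le hj) (hk.trans (by linarith))
      hsupp (funext hω)

theorem stmt_9 {U X Y : ℕ} [NeZero U] [NeZero X] [NeZero Y]
    (A : Matrix (Fin U) (Fin X) ℝ) (B : Matrix (Fin Y) (Fin U) ℝ)
    (hA0 : ∀ i j, 0 ≤ A i j) (hAcol : ∀ j, ∑ i, A i j = 1)
    (hArow : ∀ i, ∃ j, A i j ≠ 0)
    (hB0 : ∀ i j, 0 ≤ B i j) (hBcol : ∀ j, ∑ i, B i j = 1)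
    (hBtriv : ∀ ω : Fin U → ℝ, (∀ i, ∑ j, B i j * ω j = 0) → ω = 0) :
    ¬ Manipulable A B ↔
      ¬ ∃ (ω : Fin U → ℝ) (j k : Fin U), j ≠ k ∧
        (∑ i, |ω i| = 1) ∧ (∀ l, ∑ i, ω i * A i l = 0) ∧
        amin A ≤ ω j ∧ ω k ≤ -(amin A) ∧ ∀ i, i ≠ j → i ≠ k → ω i = 0 :=
  stmt_9_general A B hA0 hAcol hArow hBtriv
end

section
/- Let A (|U|×|X|) and B (|Y|×|U|) be column-stochastic matrices, A with no zero rows. Suppose the right null space of B is nontrivial and (A,B) is non-manipulable. Let 𝒜 be the set of vectors vec(ΥA) where Υ ranges over |U|×|U| matrices with each column j balanced and (0,0)-polarized at j and Frobenius norm ‖Υ‖_F ≤ 2|U|. Then there exists κ > 0, depending only on A and B, such that for every |U|×|U| matrix Ψ whose columns lie in the right null space of B and with ‖Ψ‖₁ = 1 (sum of absolute values of all entries equals 1), there is an L1-normalized vector υ with υ·vec(Ψ) ≥ κ and υ·ω ≤ 0 for all ω ∈ 𝒜. -/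
/-!
Non-manipulability says exactly that `Υ ↦ vec (Υ A)` vanishes on the cone of balanced, polarized
matrices only at `0`. A linear map with this property is bounded below on the cone by a multiple
of the norm, so the image cone `𝒞 ⊇ 𝒜` is closed. The `L¹`-unit matrices with columns in the
null space of `B` form a compact set disjoint from `𝒞`, hence at distance at least some `δ > 0`
from it. For such a `Ψ`, let `q` be the nearest point of `𝒞` to `vec Ψ`: since `𝒞` is a cone,
`υ = vec Ψ - q` is orthogonal to `q` and has `⟪υ, ω⟫ ≤ 0` on `𝒞`, so `⟪υ, vec Ψ⟫ = ‖υ‖² ≥ δ ‖υ‖`.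
Rescaling `υ` to `L¹`-norm one loses at most the factor `√(|U| |X|)`.
-/

open Finset

open scoped RealInnerProductSpace

namespace PointedCone

section ClosedImage

variable {E F : Type*} [NormedAddCommGroup E] [NormedSpace ℝ E] [FiniteDimensional ℝ E]
  [NormedAddCommGroup F] [NormedSpace ℝ F]

theorem exists_pos_mul_norm_le_norm_map (K : PointedCone ℝ E) (hK : IsClosed (K : Set E))
    (f : E →ₗ[ℝ] F) (hf : ∀ v ∈ K, f v = 0 → v = 0) :
    ∃ c > 0, ∀ v ∈ K, c * ‖v‖ ≤ ‖f v‖ := by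
  have hpos : ∀ v ∈ Metric.sphere (0 : E) 1 ∩ K, 0 < ‖f v‖ := fun v ⟨hv1, hvK⟩ =>
    norm_pos_iff.2 fun h => by simp [hf v hvK h] at hv1
  obtain ⟨c, hc, hcK⟩ := ((isCompact_sphere (0 : E) 1).inter_right hK).exists_forall_le'
    f.continuous_of_finiteDimensional.norm.continuousOn hpos
  refine ⟨c, hc, fun v hv => ?_⟩
  rcases eq_or_ne v 0 with rfl | hv0
  · simp
  have hn : 0 < ‖v‖ := norm_pos_iff.2 hv0
  have := hcK (‖v‖⁻¹ • v) ⟨by simp [norm_smul, hn.ne'], K.smul_mem (inv_nonneg.2 hn.le) hv⟩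
  rw [map_smul, norm_smul, norm_inv, norm_norm, le_inv_mul_iff₀ hn] at this
  linarith

theorem isClosed_map (K : PointedCone ℝ E) (hK : IsClosed (K : Set E))
    (f : E →ₗ[ℝ] F) (hf : ∀ v ∈ K, f v = 0 → v = 0) : IsClosed (K.map f : Set F) := by
  obtain ⟨c, hc, hcK⟩ := K.exists_pos_mul_norm_le_norm_map hK f hf
  refine isClosed_of_closure_subset fun y hy => ?_
  -- near `y`, the image of `K` is the image of a compact piece of `K`
  set R := (‖y‖ + 1) / c
  have hcpt : IsCompact (f '' (K ∩ Metric.closedBall 0 R)) :=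
    ((isCompact_closedBall 0 R).inter_left hK).image f.continuous_of_finiteDimensional
  have hsub : Metric.ball y 1 ∩ K.map f ⊆ f '' (K ∩ Metric.closedBall 0 R) := by
    rintro _ ⟨hvy, v, hv, rfl⟩
    refine ⟨v, ⟨hv, ?_⟩, rfl⟩
    rw [mem_closedBall_zero_iff, le_div_iff₀ hc]
    have := norm_le_norm_add_norm_sub' (f v) y
    rw [Metric.mem_ball, dist_eq_norm] at hvy
    change ‖f v - y‖ < 1 at hvy
    linarith [hcK v hv]
  obtain ⟨v, hv, rfl⟩ := hcpt.isClosed.closure_subset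
    (closure_mono hsub (Metric.isOpen_ball.inter_closure ⟨Metric.mem_ball_self one_pos, hy⟩))
  exact ⟨v, hv.1, rfl⟩

end ClosedImage

variable {E : Type*} [NormedAddCommGroup E] [InnerProductSpace ℝ E]

theorem exists_mem_inner_sub_eq_zero_and_inner_sub_nonpos [CompleteSpace E] (C : PointedCone ℝ E)
    (hC : IsClosed (C : Set E)) (w : E) :
    ∃ q ∈ C, ⟪w - q, q⟫ = 0 ∧ ∀ ω ∈ C, ⟪w - q, ω⟫ ≤ 0 := by
  obtain ⟨q, hq, hmin⟩ :=
    exists_norm_eq_iInf_of_complete_convex ⟨0, C.zero_mem⟩ hC.isComplete C.convex w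
  have hobtuse := (norm_eq_iInf_iff_real_inner_le_zero C.convex hq).1 hmin
  have hperp : ⟪w - q, q⟫ = 0 := by
    have h0 := hobtuse 0 C.zero_mem
    have h2 := hobtuse (2 • q) (C.smul_mem zero_le_two hq)
    rw [zero_sub, inner_neg_right] at h0
    rw [two_smul, add_sub_cancel_right] at h2
    linarith
  refine ⟨q, hq, hperp, fun ω hω => ?_⟩
  have := hobtuse ω hω
  rwa [inner_sub_right, hperp, sub_zero] at this

theorem exists_uniformly_separating_of_isCompact [CompleteSpace E] {S : Set E} (hS : IsCompact S)
    (C : PointedCone ℝ E) (hC : IsClosed (C : Set E)) (hSC : Disjoint S C) :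
    ∃ δ > 0, ∀ w ∈ S, ∃ υ : E, δ ≤ ‖υ‖ ∧ ⟪υ, w⟫ = ‖υ‖ ^ 2 ∧ ∀ ω ∈ C, ⟪υ, ω⟫ ≤ 0 := by
  obtain ⟨δ, hδ, hδSC⟩ := Metric.exists_pos_forall_lt_edist hS hC hSC
  refine ⟨δ, hδ, fun w hw => ?_⟩
  obtain ⟨q, hq, hperp, hsep⟩ := C.exists_mem_inner_sub_eq_zero_and_inner_sub_nonpos hC w
  refine ⟨w - q, ?_, ?_, hsep⟩
  · have := hδSC w hw q hq
    rw [edist_nndist, ENNReal.coe_lt_coe, ← NNReal.coe_lt_coe, coe_nndist, dist_eq_norm] at this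
    exact this.le
  · rw [← real_inner_self_eq_norm_sq]
    nth_rw 2 [← sub_add_cancel w q]
    rw [inner_add_right, hperp, add_zero]

end PointedCone

namespace EuclideanSpace

variable {ι : Type*} [Fintype ι]

theorem norm_le_sum_abs (x : EuclideanSpace ℝ ι) : ‖x‖ ≤ ∑ i, |x i| := by
  rw [EuclideanSpace.norm_eq, Real.sqrt_le_left (by positivity)]
  simpa only [Real.norm_eq_abs, sq_abs] using
    sum_sq_le_sq_sum_of_nonneg (s := univ) fun i _ => abs_nonneg (x i)

theorem sum_abs_le_sqrt_card_mul_norm (x : EuclideanSpace ℝ ι) :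
    ∑ i, |x i| ≤ √(Fintype.card ι) * ‖x‖ := by
  rw [← Real.sqrt_sq (norm_nonneg x), ← Real.sqrt_mul (Nat.cast_nonneg _),
    Real.le_sqrt (by positivity) (by positivity), EuclideanSpace.real_norm_sq_eq]
  simpa only [sq_abs, card_univ] using sq_sum_le_card_mul_sum_sq (s := univ) (f := fun i => |x i|)

theorem isCompact_setOf_mem_and_sum_abs_eq_one (N : Submodule ℝ (EuclideanSpace ℝ ι)) :
    IsCompact {w | w ∈ N ∧ ∑ i, |w i| = 1} := by
  refine Metric.isCompact_of_isClosed_isBounded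
    (N.closed_of_finiteDimensional.inter (isClosed_eq (by fun_prop) continuous_const)) ?_
  refine (Metric.isBounded_closedBall (x := 0) (r := 1)).subset fun w hw => ?_
  rw [mem_closedBall_zero_iff, ← hw.2]
  exact norm_le_sum_abs w

theorem exists_sum_abs_eq_one_uniformly_separating [Nonempty ι]
    (N : Submodule ℝ (EuclideanSpace ℝ ι)) (C : PointedCone ℝ (EuclideanSpace ℝ ι))
    (hC : IsClosed (C : Set (EuclideanSpace ℝ ι))) (hNC : ∀ w ∈ N, w ∈ C → w = 0) :
    ∃ κ > 0, ∀ w ∈ N, ∑ i, |w i| = 1 → ∃ υ : EuclideanSpace ℝ ι,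
      ∑ i, |υ i| = 1 ∧ κ ≤ ⟪υ, w⟫ ∧ ∀ ω ∈ C, ⟪υ, ω⟫ ≤ 0 := by
  have hdisj : Disjoint {w | w ∈ N ∧ ∑ i, |w i| = 1} (C : Set (EuclideanSpace ℝ ι)) :=
    Set.disjoint_left.2 fun w ⟨hwN, hw1⟩ hwC => by simp [hNC w hwN hwC] at hw1
  obtain ⟨δ, hδ, hsep⟩ := C.exists_uniformly_separating_of_isCompact
    (isCompact_setOf_mem_and_sum_abs_eq_one N) hC hdisj
  have hn : 0 < √(Fintype.card ι) := Real.sqrt_pos.2 (by exact_mod_cast Fintype.card_pos)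
  refine ⟨δ / √(Fintype.card ι), div_pos hδ hn, fun w hwN hw1 => ?_⟩
  obtain ⟨υ, hυδ, hυw, hυC⟩ := hsep w ⟨hwN, hw1⟩
  set L := ∑ i, |υ i|
  have hυ : 0 < ‖υ‖ := hδ.trans_le hυδ
  have hL : 0 < L := hυ.trans_le (norm_le_sum_abs υ)
  refine ⟨L⁻¹ • υ, ?_, ?_, fun ω hω => ?_⟩
  · simp only [PiLp.smul_apply, smul_eq_mul, abs_mul, abs_of_pos (inv_pos.2 hL), ← mul_sum]
    exact inv_mul_cancel₀ hL.ne'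
  · rw [real_inner_smul_left, hυw]
    calc δ / √(Fintype.card ι) ≤ ‖υ‖ / √(Fintype.card ι) := by gcongr
      _ = ‖υ‖ ^ 2 / (√(Fintype.card ι) * ‖υ‖) := by field_simp
      _ ≤ ‖υ‖ ^ 2 / L := by gcongr; exact sum_abs_le_sqrt_card_mul_norm υ
      _ = L⁻¹ * ‖υ‖ ^ 2 := by ring
  · rw [real_inner_smul_left]
    exact mul_nonpos_of_nonneg_of_nonpos (inv_nonneg.2 hL.le) (hυC ω hω)

end EuclideanSpace

namespace Matrix

variable {m n : Type*}

/-- The paper's `vec`, but row-major; only inner products and entrywise sums of flattened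
matrices occur, so the order of the entries is immaterial. -/
def flattenEquiv : Matrix m n ℝ ≃ₗ[ℝ] EuclideanSpace ℝ (m × n) :=
  (ofLinearEquiv ℝ).symm ≪≫ₗ (LinearEquiv.curry ℝ ℝ m n).symm ≪≫ₗ
    (WithLp.linearEquiv 2 ℝ (m × n → ℝ)).symm

@[simp]
theorem flattenEquiv_apply (M : Matrix m n ℝ) (p : m × n) : flattenEquiv M p = M p.1 p.2 := rfl

variable [Fintype m] [Fintype n]

theorem inner_flattenEquiv (M N : Matrix m n ℝ) :
    ⟪flattenEquiv M, flattenEquiv N⟫ = ∑ i, ∑ j, M i j * N i j := by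
  simp [PiLp.inner_apply, Fintype.sum_prod_type, mul_comm]

theorem sum_abs_flattenEquiv (M : Matrix m n ℝ) :
    ∑ p, |flattenEquiv M p| = ∑ i, ∑ j, |M i j| :=
  Fintype.sum_prod_type _

end Matrix

section BalancedPolarized

open Matrix

variable {n : Type*} [Fintype n]

variable (n) in
def balancedPolarizedCone : PointedCone ℝ (Matrix n n ℝ) where
  carrier := {Υ | (∀ j, ∑ i, Υ i j = 0) ∧ (∀ j, 0 ≤ Υ j j) ∧ ∀ i j, i ≠ j → Υ i j ≤ 0}
  add_mem' := fun ⟨h₁, h₂, h₃⟩ ⟨h₁', h₂', h₃'⟩ =>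
    ⟨fun j => by simp [sum_add_distrib, h₁ j, h₁' j], fun j => add_nonneg (h₂ j) (h₂' j),
      fun i j hij => add_nonpos (h₃ i j hij) (h₃' i j hij)⟩
  zero_mem' := ⟨fun _ => by simp, fun _ => le_rfl, fun _ _ _ => le_rfl⟩
  smul_mem' := fun ⟨c, hc⟩ Υ ⟨h₁, h₂, h₃⟩ =>
    ⟨fun j => by simp [← mul_sum, h₁ j], fun j => mul_nonneg hc (h₂ j),
      fun i j hij => mul_nonpos_of_nonneg_of_nonpos hc (h₃ i j hij)⟩

theorem isClosed_balancedPolarizedCone :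
    IsClosed (balancedPolarizedCone n : Set (Matrix n n ℝ)) := by
  change IsClosed {Υ : Matrix n n ℝ | _ ∧ _ ∧ _}
  simp only [Set.ofPred_and, Set.ofPred_forall]
  exact (isClosed_iInter fun j => isClosed_eq (by fun_prop) continuous_const).inter
    ((isClosed_iInter fun j => isClosed_le continuous_const (by fun_prop)).inter
      (isClosed_iInter fun i => isClosed_iInter fun j => isClosed_iInter fun _ =>
        isClosed_le (by fun_prop) continuous_const))

attribute [local instance] Matrix.normedAddCommGroup Matrix.normedSpace in
theorem isClosed_map_balancedPolarizedCone {F : Type*} [NormedAddCommGroup F] [NormedSpace ℝ F]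
    (f : Matrix n n ℝ →ₗ[ℝ] F) (hf : ∀ Υ ∈ balancedPolarizedCone n, f Υ = 0 → Υ = 0) :
    IsClosed ((balancedPolarizedCone n).map f : Set F) :=
  (balancedPolarizedCone n).isClosed_map isClosed_balancedPolarizedCone f hf

theorem eq_zero_of_not_manipulable {U X Y : ℕ} {A : Matrix (Fin U) (Fin X) ℝ}
    {B : Matrix (Fin Y) (Fin U) ℝ} (hnm : ¬ Manipulable A B) {Υ : Matrix (Fin U) (Fin U) ℝ}
    (hΥ : Υ ∈ balancedPolarizedCone (Fin U)) (hBΥA : B * Υ * A = 0) : Υ = 0 := by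
  by_contra hΥ0
  exact hnm ⟨Υ, hΥ0, hΥ.1, hΥ.2.1, hΥ.2.2, hBΥA⟩

end BalancedPolarized

theorem stmt_12_general {U X Y : ℕ} [NeZero U] [NeZero X]
    (A : Matrix (Fin U) (Fin X) ℝ) (B : Matrix (Fin Y) (Fin U) ℝ)
    (hnm : ¬ Manipulable A B) :
    ∃ κ : ℝ, 0 < κ ∧
      ∀ Ψ : Matrix (Fin U) (Fin X) ℝ,
        -- every column of `Ψ` lies in the right null space of `B`
        (∀ (l : Fin X) (i : Fin Y), ∑ j, B i j * Ψ j l = 0) →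
        (∑ i, ∑ j, |Ψ i j| = 1) →
        ∃ υ : Matrix (Fin U) (Fin X) ℝ,
          (∑ i, ∑ j, |υ i j| = 1) ∧
          κ ≤ ∑ i, ∑ j, υ i j * Ψ i j ∧
          -- `υ · ω ≤ 0` for every `ω = vec(Υ A)` in the set `𝒜`
          ∀ Υ : Matrix (Fin U) (Fin U) ℝ,
            (∀ j, ∑ i, Υ i j = 0) → (∀ j, 0 ≤ Υ j j) →
            (∀ i j, i ≠ j → Υ i j ≤ 0) →
            (∑ i, ∑ j, Υ i j ^ 2) ≤ (2 * (U : ℝ)) ^ 2 →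
            ∑ i, ∑ j, υ i j * (Υ * A) i j ≤ 0 := by
  set C := (balancedPolarizedCone (Fin U)).map
    (Matrix.flattenEquiv.toLinearMap ∘ₗ mulRightLinearMap (Fin U) ℝ A)
  set N := (LinearMap.ker (mulLeftLinearMap (Fin X) ℝ B)).map Matrix.flattenEquiv.toLinearMap
  have hC : IsClosed (C : Set (EuclideanSpace ℝ (Fin U × Fin X))) :=
    isClosed_map_balancedPolarizedCone _ fun Υ hΥ hΥA => by
      have hΥA : Υ * A = 0 := Matrix.flattenEquiv.map_eq_zero_iff.1 hΥA
      exact eq_zero_of_not_manipulable hnm hΥ (by rw [Matrix.mul_assoc, hΥA, Matrix.mul_zero])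
  have hNC : ∀ w ∈ N, w ∈ C → w = 0 := by
    rintro _ ⟨Ψ, hΨ, rfl⟩ ⟨Υ, hΥ, hΥΨ⟩
    obtain rfl : Υ * A = Ψ := Matrix.flattenEquiv.injective hΥΨ
    have hBΥA : B * Υ * A = 0 := by rw [Matrix.mul_assoc]; exact hΨ
    simp [eq_zero_of_not_manipulable hnm hΥ hBΥA]
  obtain ⟨κ, hκ, hsep⟩ :=
    EuclideanSpace.exists_sum_abs_eq_one_uniformly_separating N C hC hNC
  refine ⟨κ, hκ, fun Ψ hΨB hΨ1 => ?_⟩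
  have hΨN : Matrix.flattenEquiv Ψ ∈ N := ⟨Ψ, by ext i l; exact hΨB l i, rfl⟩
  obtain ⟨υ, hυ1, hυΨ, hυC⟩ := hsep _ hΨN (by rwa [Matrix.sum_abs_flattenEquiv])
  refine ⟨Matrix.flattenEquiv.symm υ, ?_, ?_, fun Υ hsum hdiag hoff _ => ?_⟩
  · rwa [← Matrix.sum_abs_flattenEquiv, LinearEquiv.apply_symm_apply]
  · rwa [← Matrix.inner_flattenEquiv, LinearEquiv.apply_symm_apply]
  · rw [← Matrix.inner_flattenEquiv, LinearEquiv.apply_symm_apply]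
    exact hυC _ ⟨Υ, ⟨hsum, hdiag, hoff⟩, rfl⟩

theorem stmt_12 {U X Y : ℕ} [NeZero U] [NeZero X] [NeZero Y]
    (A : Matrix (Fin U) (Fin X) ℝ) (B : Matrix (Fin Y) (Fin U) ℝ)
    (hA0 : ∀ i j, 0 ≤ A i j) (hAcol : ∀ j, ∑ i, A i j = 1)
    (hArow : ∀ i, ∃ j, A i j ≠ 0)
    (hB0 : ∀ i j, 0 ≤ B i j) (hBcol : ∀ j, ∑ i, B i j = 1)
    -- the right null space of `B` is nontrivial
    (hBnontriv : ∃ ω : Fin U → ℝ, ω ≠ 0 ∧ ∀ i, ∑ j, B i j * ω j = 0)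
    (hnm : ¬ Manipulable A B) :
    ∃ κ : ℝ, 0 < κ ∧
      ∀ Ψ : Matrix (Fin U) (Fin X) ℝ,
        -- every column of `Ψ` lies in the right null space of `B`
        (∀ (l : Fin X) (i : Fin Y), ∑ j, B i j * Ψ j l = 0) →
        (∑ i, ∑ j, |Ψ i j| = 1) →
        ∃ υ : Matrix (Fin U) (Fin X) ℝ,
          (∑ i, ∑ j, |υ i j| = 1) ∧
          κ ≤ ∑ i, ∑ j, υ i j * Ψ i j ∧
          -- `υ · ω ≤ 0` for every `ω = vec(Υ A)` in the set `𝒜`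
          ∀ Υ : Matrix (Fin U) (Fin U) ℝ,
            (∀ j, ∑ i, Υ i j = 0) → (∀ j, 0 ≤ Υ j j) →
            (∀ i j, i ≠ j → Υ i j ≤ 0) →
            (∑ i, ∑ j, Υ i j ^ 2) ≤ (2 * (U : ℝ)) ^ 2 →
            ∑ i, ∑ j, υ i j * (Υ * A) i j ≤ 0 :=
  stmt_12_general A B hnm
end

section
/- Let A (|U|×|X₁|) and B (|Y₁|×|U|) be column-stochastic matrices, A with no zero rows, and suppose (A,B) is non-manipulable. Let Φ^N and Φ̂ be |U|×|U| column-stochastic matrices, Γ^N = BΦ^N A, and let Γ̂ be any |Y₁|×|X₁| matrix. Suppose Φ̂ ∈ G_μ(Γ̂), meaning there exists a |Y₁|×|U| column-stochastic matrix Γ̃ with ‖Π_B(Γ̃ − Γ̂)Π_A‖₁ ≤ μ and BΦ̂A = Π_B Γ̃ Π_A, where Π_A, Π_B are the orthogonal projectors onto the row space of A and the column space of B. Then ‖Φ^N − Φ̂‖₁ ≤ c₁μ + c₂‖Γ^N − Γ̂‖₁ + c₃‖Φ^N − I‖₁ for positive constants c₁, c₂, c₃ depending only on A and B. -/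
open Finset

/-- Entrywise L1-norm of a matrix. -/
noncomputable def l1M {m n : ℕ} (M : Matrix (Fin m) (Fin n) ℝ) : ℝ :=
  ∑ i, ∑ j, |M i j|

lemma l1M_nonneg {m n : ℕ} (M : Matrix (Fin m) (Fin n) ℝ) : 0 ≤ l1M M :=
  Finset.sum_nonneg fun _ _ => Finset.sum_nonneg fun _ _ => abs_nonneg _

lemma l1M_pos {m n : ℕ} {M : Matrix (Fin m) (Fin n) ℝ} (h : M ≠ 0) : 0 < l1M M := by
  rcases lt_or_eq_of_le (l1M_nonneg M) with h' | h'
  · exact h'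
  · exfalso; apply h
    ext i j
    have h1 := (Finset.sum_eq_zero_iff_of_nonneg
      (fun i _ => Finset.sum_nonneg fun j _ => abs_nonneg (M i j))).mp h'.symm i (mem_univ i)
    have h2 := (Finset.sum_eq_zero_iff_of_nonneg
      (fun j _ => abs_nonneg (M i j))).mp h1 j (mem_univ j)
    simpa [abs_eq_zero] using h2

lemma l1M_neg {m n : ℕ} (M : Matrix (Fin m) (Fin n) ℝ) : l1M (-M) = l1M M := by
  simp [l1M]

lemma l1M_add_le {m n : ℕ} (M N : Matrix (Fin m) (Fin n) ℝ) :
    l1M (M + N) ≤ l1M M + l1M N := by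
  unfold l1M
  rw [← Finset.sum_add_distrib]
  refine Finset.sum_le_sum fun i _ => ?_
  rw [← Finset.sum_add_distrib]
  exact Finset.sum_le_sum fun j _ => abs_add_le _ _

lemma l1M_smul {m n : ℕ} (c : ℝ) (M : Matrix (Fin m) (Fin n) ℝ) :
    l1M (c • M) = |c| * l1M M := by
  simp [l1M, abs_mul, Finset.mul_sum]

lemma l1M_entry_le {m n : ℕ} (M : Matrix (Fin m) (Fin n) ℝ) (i j) :
    |M i j| ≤ l1M M := by
  calc |M i j| ≤ ∑ j', |M i j'| :=
        Finset.single_le_sum (f := fun j' => |M i j'|) (fun j' _ => abs_nonneg _) (mem_univ j)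
  _ ≤ l1M M := Finset.single_le_sum (f := fun i => ∑ j', |M i j'|)
      (fun i' _ => Finset.sum_nonneg fun j' _ => abs_nonneg _) (mem_univ i)

lemma l1M_mul_le {m n p : ℕ} (M : Matrix (Fin m) (Fin n) ℝ) (N : Matrix (Fin n) (Fin p) ℝ) :
    l1M (M * N) ≤ l1M M * l1M N := by
  have h1 : l1M (M * N) ≤ ∑ k, (∑ i, |M i k|) * (∑ j, |N k j|) := by
    unfold l1M
    calc ∑ i, ∑ j, |(M * N) i j| ≤ ∑ i, ∑ j, ∑ k, |M i k| * |N k j| := by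
          refine Finset.sum_le_sum fun i _ => Finset.sum_le_sum fun j _ => ?_
          simp only [Matrix.mul_apply]
          calc |∑ k, M i k * N k j| ≤ ∑ k, |M i k * N k j| := Finset.abs_sum_le_sum_abs _ _
          _ = ∑ k, |M i k| * |N k j| := by simp [abs_mul]
    _ = ∑ i, ∑ k, ∑ j, |M i k| * |N k j| := by
          refine Finset.sum_congr rfl fun i _ => ?_
          rw [Finset.sum_comm]
    _ = ∑ k, ∑ i, ∑ j, |M i k| * |N k j| := by rw [Finset.sum_comm]
    _ = ∑ k, (∑ i, |M i k|) * (∑ j, |N k j|) := by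
          refine Finset.sum_congr rfl fun k _ => ?_
          rw [Finset.sum_mul]
          exact Finset.sum_congr rfl fun i _ => (Finset.mul_sum _ _ _).symm
  calc l1M (M * N) ≤ ∑ k, (∑ i, |M i k|) * (∑ j, |N k j|) := h1
  _ ≤ ∑ k, (∑ i, |M i k|) * l1M N := by
        refine Finset.sum_le_sum fun k _ => ?_
        refine mul_le_mul_of_nonneg_left ?_ (Finset.sum_nonneg fun i _ => abs_nonneg _)
        exact Finset.single_le_sum (f := fun k => ∑ j, |N k j|)
          (fun k' _ => Finset.sum_nonneg fun j _ => abs_nonneg _) (mem_univ k)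
  _ = (∑ k, ∑ i, |M i k|) * l1M N := (Finset.sum_mul _ _ _).symm
  _ = l1M M * l1M N := by unfold l1M; rw [Finset.sum_comm]

lemma l1M_mul3_le {m n p q : ℕ} (P : Matrix (Fin m) (Fin n) ℝ)
    (M : Matrix (Fin n) (Fin p) ℝ) (Q : Matrix (Fin p) (Fin q) ℝ) :
    l1M (P * M * Q) ≤ (1 + l1M P) * (1 + l1M Q) * l1M M := by
  calc l1M (P * M * Q) ≤ l1M (P * M) * l1M Q := l1M_mul_le _ _
  _ ≤ (l1M P * l1M M) * l1M Q :=
      mul_le_mul_of_nonneg_right (l1M_mul_le _ _) (l1M_nonneg _)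
  _ ≤ (1 + l1M P) * (1 + l1M Q) * l1M M := by
      nlinarith [l1M_nonneg P, l1M_nonneg Q, l1M_nonneg M]

section Key
attribute [local instance] Matrix.normedAddCommGroup Matrix.normedSpace

lemma l1M_continuous {m n : ℕ} : Continuous (l1M (m := m) (n := n)) := by
  unfold l1M
  refine continuous_finset_sum _ fun i _ => continuous_finset_sum _ fun j _ => ?_
  exact (continuous_id.matrix_elem i j).abs

lemma key_const {U X Y : ℕ} (A : Matrix (Fin U) (Fin X) ℝ) (B : Matrix (Fin Y) (Fin U) ℝ)
    (hnm : ¬ Manipulable A B) :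
    ∃ C : ℝ, 0 < C ∧ ∀ Υ : Matrix (Fin U) (Fin U) ℝ,
      (∀ j, ∑ i, Υ i j = 0) → (∀ j, 0 ≤ Υ j j) → (∀ i j, i ≠ j → Υ i j ≤ 0) →
      l1M Υ ≤ C * l1M (B * Υ * A) := by
  classical
  set S : Set (Matrix (Fin U) (Fin U) ℝ) :=
    {Υ | (∀ j, ∑ i, Υ i j = 0) ∧ (∀ j, 0 ≤ Υ j j) ∧ (∀ i j, i ≠ j → Υ i j ≤ 0) ∧ l1M Υ = 1}
    with hS
  have hf : Continuous fun Υ : Matrix (Fin U) (Fin U) ℝ => l1M (B * Υ * A) :=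
    l1M_continuous.comp ((continuous_const.matrix_mul continuous_id).matrix_mul continuous_const)
  by_cases hne : S.Nonempty
  · have hclosed : IsClosed S := by
      have h1 : IsClosed {Υ : Matrix (Fin U) (Fin U) ℝ | ∀ j, ∑ i, Υ i j = 0} := by
        have he : {Υ : Matrix (Fin U) (Fin U) ℝ | ∀ j, ∑ i, Υ i j = 0}
            = ⋂ j, {Υ : Matrix (Fin U) (Fin U) ℝ | ∑ i, Υ i j = 0} := by ext Υ; simp
        rw [he]
        refine isClosed_iInter fun j => isClosed_eq ?_ continuous_const
        exact continuous_finset_sum _ fun i _ => continuous_id.matrix_elem i j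
      have h2 : IsClosed {Υ : Matrix (Fin U) (Fin U) ℝ | ∀ j, 0 ≤ Υ j j} := by
        have he : {Υ : Matrix (Fin U) (Fin U) ℝ | ∀ j, 0 ≤ Υ j j}
            = ⋂ j, {Υ : Matrix (Fin U) (Fin U) ℝ | 0 ≤ Υ j j} := by ext Υ; simp
        rw [he]
        exact isClosed_iInter fun j => isClosed_le continuous_const (continuous_id.matrix_elem j j)
      have h3 : IsClosed {Υ : Matrix (Fin U) (Fin U) ℝ | ∀ i j, i ≠ j → Υ i j ≤ 0} := by
        have he : {Υ : Matrix (Fin U) (Fin U) ℝ | ∀ i j, i ≠ j → Υ i j ≤ 0}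
            = ⋂ i, ⋂ j, {Υ : Matrix (Fin U) (Fin U) ℝ | i ≠ j → Υ i j ≤ 0} := by ext Υ; simp
        rw [he]
        refine isClosed_iInter fun i => isClosed_iInter fun j => ?_
        by_cases hij : i = j
        · simp [hij]
        · have : {Υ : Matrix (Fin U) (Fin U) ℝ | i ≠ j → Υ i j ≤ 0}
              = {Υ : Matrix (Fin U) (Fin U) ℝ | Υ i j ≤ 0} := by
            ext Υ; simp [hij]
          rw [this]
          exact isClosed_le (continuous_id.matrix_elem i j) continuous_const
      have h4 : IsClosed {Υ : Matrix (Fin U) (Fin U) ℝ | l1M Υ = 1} :=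
        isClosed_eq l1M_continuous continuous_const
      exact (h1.inter (h2.inter (h3.inter h4)))
    have hbdd : Bornology.IsBounded S := by
      refine (Metric.isBounded_iff_subset_closedBall 0).mpr ⟨1, fun Υ hΥ => ?_⟩
      simp only [Metric.mem_closedBall, dist_zero_right]
      refine (Matrix.norm_le_iff zero_le_one).mpr fun i j => ?_
      rw [Real.norm_eq_abs]
      calc |Υ i j| ≤ l1M Υ := l1M_entry_le Υ i j
      _ = 1 := hΥ.2.2.2
    have hcpt : IsCompact S := Metric.isCompact_of_isClosed_isBounded hclosed hbdd
    obtain ⟨Υ₀, hΥ₀S, hmin⟩ := hcpt.exists_isMinOn hne hf.continuousOn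
    set m := l1M (B * Υ₀ * A) with hm
    have hΥ₀ne : Υ₀ ≠ 0 := by
      intro h
      have := hΥ₀S.2.2.2
      rw [h] at this
      simp [l1M] at this
    have hBA : B * Υ₀ * A ≠ 0 := fun h =>
      hnm ⟨Υ₀, hΥ₀ne, hΥ₀S.1, hΥ₀S.2.1, hΥ₀S.2.2.1, h⟩
    have hmpos : 0 < m := l1M_pos hBA
    refine ⟨m⁻¹, inv_pos.mpr hmpos, fun Υ hb hd ho => ?_⟩
    by_cases hΥ : Υ = 0
    · simp [hΥ, l1M]
    · set t := l1M Υ with ht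
      have htpos : 0 < t := l1M_pos hΥ
      have hmem : t⁻¹ • Υ ∈ S := by
        refine ⟨fun j => ?_, fun j => ?_, fun i j hij => ?_, ?_⟩
        · simp [Matrix.smul_apply, ← Finset.mul_sum, hb j]
        · exact smul_nonneg (inv_nonneg.mpr htpos.le) (hd j)
        · exact smul_nonpos_of_nonneg_of_nonpos (inv_nonneg.mpr htpos.le) (ho i j hij)
        · rw [l1M_smul, abs_of_pos (inv_pos.mpr htpos)]
          exact inv_mul_cancel₀ htpos.ne'
      have hmle := hmin hmem
      simp only [Set.mem_setOf_eq] at hmle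
      have heq : l1M (B * (t⁻¹ • Υ) * A) = t⁻¹ * l1M (B * Υ * A) := by
        rw [Matrix.mul_smul, Matrix.smul_mul, l1M_smul, abs_of_pos (inv_pos.mpr htpos)]
      rw [heq] at hmle
      calc t = m⁻¹ * (m * t) := by field_simp
      _ ≤ m⁻¹ * l1M (B * Υ * A) := by
          refine mul_le_mul_of_nonneg_left ?_ (inv_nonneg.mpr hmpos.le)
          calc m * t ≤ (t⁻¹ * l1M (B * Υ * A)) * t :=
                mul_le_mul_of_nonneg_right hmle htpos.le
          _ = l1M (B * Υ * A) := by field_simp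
  · refine ⟨1, one_pos, fun Υ hb hd ho => ?_⟩
    by_cases hΥ : Υ = 0
    · simp [hΥ, l1M]
    · exfalso
      have htpos : 0 < l1M Υ := l1M_pos hΥ
      refine hne ⟨(l1M Υ)⁻¹ • Υ, fun j => ?_, fun j => ?_, fun i j hij => ?_, ?_⟩
      · simp [Matrix.smul_apply, ← Finset.mul_sum, hb j]
      · exact smul_nonneg (inv_nonneg.mpr htpos.le) (hd j)
      · exact smul_nonpos_of_nonneg_of_nonpos (inv_nonneg.mpr htpos.le) (ho i j hij)
      · rw [l1M_smul, abs_of_pos (inv_pos.mpr htpos)]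
        exact inv_mul_cancel₀ htpos.ne'

end Key

/-- `I - Φ` lies in the manipulation cone when `Φ` is column stochastic. -/
lemma cone_of_stoch {U : ℕ} (Φ : Matrix (Fin U) (Fin U) ℝ)
    (h0 : ∀ i j, 0 ≤ Φ i j) (hc : ∀ j, ∑ i, Φ i j = 1) :
    (∀ j, ∑ i, ((1 : Matrix (Fin U) (Fin U) ℝ) - Φ) i j = 0) ∧
    (∀ j, 0 ≤ ((1 : Matrix (Fin U) (Fin U) ℝ) - Φ) j j) ∧
    (∀ i j, i ≠ j → ((1 : Matrix (Fin U) (Fin U) ℝ) - Φ) i j ≤ 0) := by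
  refine ⟨fun j => ?_, fun j => ?_, fun i j hij => ?_⟩
  · simp [Matrix.sub_apply, Finset.sum_sub_distrib, hc j, Matrix.one_apply]
  · have hle : Φ j j ≤ 1 := by
      rw [← hc j]
      exact Finset.single_le_sum (f := fun i => Φ i j) (fun i _ => h0 i j) (mem_univ j)
    simp [Matrix.sub_apply, Matrix.one_apply]
    linarith
  · simp [Matrix.sub_apply, Matrix.one_apply, hij]
    exact h0 i j

theorem stmt_13 {U X Y : ℕ} [NeZero U] [NeZero X] [NeZero Y]
    (A : Matrix (Fin U) (Fin X) ℝ) (B : Matrix (Fin Y) (Fin U) ℝ)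
    (hA0 : ∀ i j, 0 ≤ A i j) (hAcol : ∀ j, ∑ i, A i j = 1)
    (hArow : ∀ i, ∃ j, A i j ≠ 0)
    (hB0 : ∀ i j, 0 ≤ B i j) (hBcol : ∀ j, ∑ i, B i j = 1)
    (hnm : ¬ Manipulable A B)
    -- `Π_A` : orthogonal projector onto the row space of `A`
    (PA : Matrix (Fin X) (Fin X) ℝ)
    (hPAsymm : PA.IsSymm) (hPAidem : PA * PA = PA)
    (hAPA : A * PA = A) (hPArange : ∃ M : Matrix (Fin X) (Fin U) ℝ, PA = M * A)
    -- `Π_B` : orthogonal projector onto the column space of `B`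
    (PB : Matrix (Fin Y) (Fin Y) ℝ)
    (hPBsymm : PB.IsSymm) (hPBidem : PB * PB = PB)
    (hPBB : PB * B = B) (hPBrange : ∃ N : Matrix (Fin U) (Fin Y) ℝ, PB = B * N) :
    ∃ c1 c2 c3 : ℝ, 0 < c1 ∧ 0 < c2 ∧ 0 < c3 ∧
      ∀ (μ : ℝ) (ΦN Φhat : Matrix (Fin U) (Fin U) ℝ)
        (Γhat Γtilde : Matrix (Fin Y) (Fin X) ℝ),
        0 < μ →
        (∀ i j, 0 ≤ ΦN i j) → (∀ j, ∑ i, ΦN i j = 1) →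
        (∀ i j, 0 ≤ Φhat i j) → (∀ j, ∑ i, Φhat i j = 1) →
        (∀ i j, 0 ≤ Γtilde i j) → (∀ j, ∑ i, Γtilde i j = 1) →
        l1M (PB * (Γtilde - Γhat) * PA) ≤ μ →
        B * Φhat * A = PB * Γtilde * PA →
        l1M (ΦN - Φhat) ≤
          c1 * μ + c2 * l1M (B * ΦN * A - Γhat) + c3 * l1M (ΦN - 1) := by
  obtain ⟨C, hC, hkey⟩ := key_const A B hnm
  have hKBpos : (0:ℝ) < (1 + l1M B) * (1 + l1M A) := by
    have := l1M_nonneg B; have := l1M_nonneg A; nlinarith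
  have hKPpos : (0:ℝ) < (1 + l1M PB) * (1 + l1M PA) := by
    have := l1M_nonneg PB; have := l1M_nonneg PA; nlinarith
  refine ⟨C, C * ((1 + l1M PB) * (1 + l1M PA)), 1 + C * ((1 + l1M B) * (1 + l1M A)),
    hC, by positivity, by nlinarith, ?_⟩
  intro μ ΦN Φhat Γhat Γtilde hμ hΦN0 hΦNcol hΦh0 hΦhcol hΓ0 hΓcol hμle hBPhA
  obtain ⟨hb, hd, ho⟩ := cone_of_stoch Φhat hΦh0 hΦhcol
  have h1 : l1M (1 - Φhat) ≤ C * l1M (B * (1 - Φhat) * A) := hkey _ hb hd ho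
  -- the key algebraic identity
  have e1 : PB * (B * ΦN * A) * PA = B * ΦN * A := by
    rw [← Matrix.mul_assoc, ← Matrix.mul_assoc, hPBB, Matrix.mul_assoc (B * ΦN) A PA,
      Matrix.mul_assoc B ΦN A, hAPA, Matrix.mul_assoc]
  have e2 : PB * (B * ΦN * A - Γhat) * PA = B * ΦN * A - PB * Γhat * PA := by
    rw [Matrix.mul_sub, Matrix.sub_mul, e1]
  have e3 : PB * (Γtilde - Γhat) * PA = PB * Γtilde * PA - PB * Γhat * PA := by
    rw [Matrix.mul_sub, Matrix.sub_mul]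
  have hid : B * (1 - Φhat) * A
      = B * (1 - ΦN) * A + PB * (B * ΦN * A - Γhat) * PA
        + -(PB * (Γtilde - Γhat) * PA) := by
    rw [e2, e3, Matrix.mul_sub, Matrix.mul_sub, Matrix.mul_one, Matrix.sub_mul,
      Matrix.sub_mul, hBPhA]
    abel
  -- bounds
  have hneg : l1M (1 - ΦN) = l1M (ΦN - 1) := by
    rw [← l1M_neg (1 - ΦN), neg_sub]
  have b1 : l1M (B * (1 - ΦN) * A) ≤ (1 + l1M B) * (1 + l1M A) * l1M (ΦN - 1) := by
    calc l1M (B * (1 - ΦN) * A) ≤ (1 + l1M B) * (1 + l1M A) * l1M (1 - ΦN) :=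
          l1M_mul3_le _ _ _
    _ = (1 + l1M B) * (1 + l1M A) * l1M (ΦN - 1) := by rw [hneg]
  have b2 : l1M (PB * (B * ΦN * A - Γhat) * PA)
      ≤ (1 + l1M PB) * (1 + l1M PA) * l1M (B * ΦN * A - Γhat) := l1M_mul3_le _ _ _
  have b3 : l1M (B * (1 - Φhat) * A)
      ≤ (1 + l1M B) * (1 + l1M A) * l1M (ΦN - 1)
        + (1 + l1M PB) * (1 + l1M PA) * l1M (B * ΦN * A - Γhat) + μ := by
    rw [hid]
    calc l1M (B * (1 - ΦN) * A + PB * (B * ΦN * A - Γhat) * PA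
          + -(PB * (Γtilde - Γhat) * PA))
        ≤ l1M (B * (1 - ΦN) * A + PB * (B * ΦN * A - Γhat) * PA)
          + l1M (-(PB * (Γtilde - Γhat) * PA)) := l1M_add_le _ _
    _ ≤ l1M (B * (1 - ΦN) * A) + l1M (PB * (B * ΦN * A - Γhat) * PA)
          + l1M (-(PB * (Γtilde - Γhat) * PA)) := by
          have := l1M_add_le (B * (1 - ΦN) * A) (PB * (B * ΦN * A - Γhat) * PA)
          linarith
    _ ≤ (1 + l1M B) * (1 + l1M A) * l1M (ΦN - 1)
          + (1 + l1M PB) * (1 + l1M PA) * l1M (B * ΦN * A - Γhat) + μ := by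
          rw [l1M_neg]
          linarith
  have hsplit : l1M (ΦN - Φhat) ≤ l1M (1 - Φhat) + l1M (ΦN - 1) := by
    have he : ΦN - Φhat = (1 - Φhat) + -((1:Matrix (Fin U) (Fin U) ℝ) - ΦN) := by abel
    calc l1M (ΦN - Φhat) = l1M ((1 - Φhat) + -((1:Matrix (Fin U) (Fin U) ℝ) - ΦN)) := by
          rw [he]
    _ ≤ l1M (1 - Φhat) + l1M (-((1:Matrix (Fin U) (Fin U) ℝ) - ΦN)) := l1M_add_le _ _
    _ = l1M (1 - Φhat) + l1M (ΦN - 1) := by rw [l1M_neg, hneg]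
  have h2 : l1M (1 - Φhat)
      ≤ C * ((1 + l1M B) * (1 + l1M A) * l1M (ΦN - 1)
        + (1 + l1M PB) * (1 + l1M PA) * l1M (B * ΦN * A - Γhat) + μ) :=
    le_trans h1 (mul_le_mul_of_nonneg_left b3 hC.le)
  calc l1M (ΦN - Φhat) ≤ l1M (1 - Φhat) + l1M (ΦN - 1) := hsplit
  _ ≤ C * ((1 + l1M B) * (1 + l1M A) * l1M (ΦN - 1)
        + (1 + l1M PB) * (1 + l1M PA) * l1M (B * ΦN * A - Γhat) + μ) + l1M (ΦN - 1) := by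
      linarith
  _ = C * μ + C * ((1 + l1M PB) * (1 + l1M PA)) * l1M (B * ΦN * A - Γhat)
        + (1 + C * ((1 + l1M B) * (1 + l1M A))) * l1M (ΦN - 1) := by ring
end

section
/- Let A (|U|×|X₁|) and B (|Y₁|×|U|) be column-stochastic matrices. If (A,B) is manipulable, then there exists a |U|×|U| column-stochastic matrix Φ' with Φ' ≠ I such that BΦ'A = BA. -/
open Finset

theorem stmt_14 {U X Y : ℕ} [NeZero U] [NeZero X] [NeZero Y]
    (A : Matrix (Fin U) (Fin X) ℝ) (B : Matrix (Fin Y) (Fin U) ℝ)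
    (hA0 : ∀ i j, 0 ≤ A i j) (hAcol : ∀ j, ∑ i, A i j = 1)
    (hB0 : ∀ i j, 0 ≤ B i j) (hBcol : ∀ j, ∑ i, B i j = 1)
    (hman : Manipulable A B) :
    ∃ Φ' : Matrix (Fin U) (Fin U) ℝ,
      (∀ i j, 0 ≤ Φ' i j) ∧ (∀ j, ∑ i, Φ' i j = 1) ∧
      Φ' ≠ 1 ∧ B * Φ' * A = B * A := by
  obtain ⟨Υ, hne, hcol, hdiag, hoff, hzero⟩ := hman
  have hU : (Finset.univ : Finset (Fin U)).Nonempty := Finset.univ_nonempty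
  set c : ℝ := Finset.univ.sup' hU (fun j => Υ j j) with hc
  -- c is the max diagonal entry
  have hcge : ∀ j, Υ j j ≤ c := fun j => hc ▸ Finset.le_sup' (fun j => Υ j j) (Finset.mem_univ j)
  have hcpos : 0 < c := by
    by_contra h
    push_neg at h
    have hdzero : ∀ j, Υ j j = 0 := fun j =>
      le_antisymm (le_trans (hcge j) h) (hdiag j)
    apply hne
    ext i j
    by_cases hij : i = j
    · simp [hij, hdzero j]
    · -- column j sums to 0, nonpositive off-diagonal entries, diagonal 0
      have hsum := hcol j
      have hall : ∀ i ∈ Finset.univ, Υ i j ≤ 0 := by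
        intro i _
        by_cases h' : i = j
        · simp [h', hdzero j]
        · exact hoff i j h'
      have := (Finset.sum_eq_zero_iff_of_nonpos hall).mp hsum i (Finset.mem_univ i)
      simpa using this
  obtain ⟨j₀, _, hj₀⟩ := Finset.exists_mem_eq_sup' hU (fun j => Υ j j)
  refine ⟨1 - c⁻¹ • Υ, ?_, ?_, ?_, ?_⟩
  · intro i j
    simp only [Matrix.sub_apply, Matrix.smul_apply, smul_eq_mul, Matrix.one_apply]
    by_cases hij : i = j
    · subst hij
      have : c⁻¹ * Υ i i ≤ 1 := by
        rw [← div_eq_inv_mul, div_le_one hcpos]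
        exact hcge i
      simpa using this
    · have : c⁻¹ * Υ i j ≤ 0 :=
        mul_nonpos_of_nonneg_of_nonpos (inv_nonneg.mpr hcpos.le) (hoff i j hij)
      simp [hij]; linarith
  · intro j
    simp only [Matrix.sub_apply, Matrix.smul_apply, smul_eq_mul]
    rw [Finset.sum_sub_distrib, ← Finset.mul_sum, hcol j]
    simp [Matrix.one_apply, Finset.sum_ite_eq]
  · intro h
    have h0 : (1 - c⁻¹ • Υ) j₀ j₀ = 1 - c⁻¹ * Υ j₀ j₀ := by
      simp [Matrix.sub_apply, Matrix.one_apply]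
    rw [h] at h0
    simp [Matrix.one_apply] at h0
    have : c⁻¹ * Υ j₀ j₀ = 0 := by linarith
    have hcj : c = Υ j₀ j₀ := hj₀
    have hΥ : Υ j₀ j₀ = 0 := by
      rcases mul_eq_zero.mp this with h' | h'
      · exact absurd h' (inv_ne_zero hcpos.ne')
      · exact h'
    rw [hcj, hΥ] at hcpos
    exact lt_irrefl 0 hcpos
  · have : B * (1 - c⁻¹ • Υ) * A = B * A - c⁻¹ • (B * Υ * A) := by
      rw [Matrix.mul_sub, Matrix.sub_mul, Matrix.mul_smul, Matrix.smul_mul, Matrix.mul_one]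
    rw [this, hzero]
    simp
end
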